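/- arXiv:1804.09879 — 5 statements merged into one kernel-verified Lean document; each statement's English description precedes it below -/
import Mathlib

section
/- Let δ ∈ (0, 1/2] and let 𝒩 be a δ-net of the unit sphere S^{d−1}. Let G be a convex body in ℝ^d with support function h_G, and let a ∈ ℝ^d, 0 < r ≤ R be such that B(a, r) ⊆ G ⊆ B(a, R). Let ĥ : S^{d−1} → ℝ be any function and Ĝ = {x ∈ ℝ^d : ⟨u, x⟩ ≤ ĥ(u) for all u ∈ 𝒩}. Set t = max_{u ∈ 𝒩} |ĥ(u) − h_G(u)|. If t ≤ r/2, then the Hausdorff distance satisfies d_H(Ĝ, G) ≤ 3tR/(2r) + 4Rδ. -/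
open MeasureTheory Metric Set
open scoped RealInnerProductSpace

set_option maxHeartbeats 1000000 in
/-- (Lemma 7 of Brunel.) If `𝒩` is a `δ`-net of the unit sphere,
`B(a,r) ⊆ G ⊆ B(a,R)` for a convex body `G`, `ĥ` is any function on the sphere and
`Ĝ = {x : ⟨u,x⟩ ≤ ĥ(u) ∀ u ∈ 𝒩}`, and `max_{u ∈ 𝒩} |ĥ(u) - h_G(u)| ≤ t ≤ r/2`, then
`d_H(Ĝ, G) ≤ 3tR/(2r) + 4Rδ`. -/
theorem stmt_5
    (d : ℕ) (hd : 1 ≤ d) (δ : ℝ) (hδ : δ ∈ Ioc (0:ℝ) (1/2))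
    (N : Finset (EuclideanSpace ℝ (Fin d)))
    (hNsph : ∀ u ∈ N, ‖u‖ = 1)
    (hNnet : ∀ v : EuclideanSpace ℝ (Fin d), ‖v‖ = 1 → ∃ u ∈ N, dist v u ≤ δ)
    (G : Set (EuclideanSpace ℝ (Fin d))) (hGconv : Convex ℝ G) (hGcomp : IsCompact G)
    (a : EuclideanSpace ℝ (Fin d)) (r R : ℝ) (hr : 0 < r) (hrR : r ≤ R)
    (hball : closedBall a r ⊆ G) (hGR : G ⊆ closedBall a R)
    (hhat : EuclideanSpace ℝ (Fin d) → ℝ)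
    (t : ℝ) (ht : ∀ u ∈ N, |hhat u - sSup ((fun v => ⟪u, v⟫) '' G)| ≤ t)
    (htr : t ≤ r / 2) :
    hausdorffDist {x : EuclideanSpace ℝ (Fin d) | ∀ u ∈ N, ⟪u, x⟫ ≤ hhat u} G ≤
      3 * t * R / (2 * r) + 4 * R * δ := by
  classical
  have hδ0 : 0 < δ := hδ.1
  have hδ2 : δ ≤ 1 / 2 := hδ.2
  have hR : 0 < R := lt_of_lt_of_le hr hrR
  have haG : a ∈ G := hball (mem_closedBall_self hr.le)
  have hGne : G.Nonempty := ⟨a, haG⟩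
  set h : EuclideanSpace ℝ (Fin d) → ℝ := fun u => sSup ((fun v => ⟪u, v⟫) '' G) with hhdef
  set Ghat : Set (EuclideanSpace ℝ (Fin d)) := {x : EuclideanSpace ℝ (Fin d) | ∀ u ∈ N, ⟪u, x⟫ ≤ hhat u} with hGhat
  have hbdd : ∀ u : EuclideanSpace ℝ (Fin d), BddAbove ((fun v : EuclideanSpace ℝ (Fin d) => ⟪u, v⟫) '' G) := by
    intro u
    have hcont : Continuous fun v : EuclideanSpace ℝ (Fin d) => ⟪u, v⟫ := continuous_const.inner continuous_id
    exact (hGcomp.image hcont).bddAbove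
  have hle : ∀ (u x : EuclideanSpace ℝ (Fin d)), x ∈ G → ⟪u, x⟫ ≤ h u := fun u x hx =>
    le_csSup (hbdd u) ⟨x, hx, rfl⟩
  have hsup_le : ∀ (u : EuclideanSpace ℝ (Fin d)) (c : ℝ), (∀ x ∈ G, ⟪u, x⟫ ≤ c) → h u ≤ c := fun u c hc =>
    csSup_le (hGne.image _) (by rintro _ ⟨x, hx, rfl⟩; exact hc x hx)
  -- lower bound for support function
  have hlow : ∀ u : EuclideanSpace ℝ (Fin d), ‖u‖ = 1 → ⟪u, a⟫ + r ≤ h u := by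
    intro u hu
    have hmem : a + r • u ∈ G := by
      apply hball
      simp [mem_closedBall, dist_eq_norm, norm_smul, hu, abs_of_nonneg hr.le]
    have h1 := hle u _ hmem
    have h2 : ⟪u, a + r • u⟫ = ⟪u, a⟫ + r := by
      rw [inner_add_right, real_inner_smul_right, real_inner_self_eq_norm_sq, hu]
      ring
    linarith [h2 ▸ h1]
  -- upper bound
  have hdistR : ∀ x ∈ G, ‖x - a‖ ≤ R := by
    intro x hx
    have := hGR hx
    rwa [mem_closedBall, dist_eq_norm] at this
  have hhigh : ∀ u : EuclideanSpace ℝ (Fin d), ‖u‖ = 1 → h u ≤ ⟪u, a⟫ + R := by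
    intro u hu
    apply hsup_le
    intro x hx
    have h1 : ⟪u, x - a⟫ ≤ R := by
      calc ⟪u, x - a⟫ ≤ ‖u‖ * ‖x - a‖ := real_inner_le_norm _ _
        _ ≤ 1 * R := by rw [hu, one_mul]; simpa using hdistR x hx
        _ = R := one_mul R
    rw [inner_sub_right] at h1; linarith
  -- t is nonnegative
  have ht0 : 0 ≤ t := by
    obtain ⟨u, hu, -⟩ := hNnet (EuclideanSpace.single ⟨0, hd⟩ 1) (by simp)
    exact (abs_nonneg _).trans (ht u hu)
  set ε : ℝ := 3 * t * R / (2 * r) + 4 * R * δ with hε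
  have hε0 : 0 ≤ ε := by positivity
  apply hausdorffDist_le_of_infDist hε0
  · -- Ĝ ⊆ G + ε
    intro x hx
    -- first, ‖x - a‖ ≤ 3R
    have key : ∀ u ∈ N, ⟪u, x - a⟫ ≤ h u - ⟪u, a⟫ + t := by
      intro u huN
      have h1 : ⟪u, x⟫ ≤ hhat u := hx u huN
      have h2 := abs_le.mp (ht u huN)
      rw [inner_sub_right]
      change -t ≤ hhat u - h u ∧ hhat u - h u ≤ t at h2
      linarith [h2.1]
    have hxa3R : ‖x - a‖ ≤ 3 * R := by
      rcases eq_or_ne x a with rfl | hxa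
      · simp; positivity
      · have hn : 0 < ‖x - a‖ := norm_pos_iff.mpr (sub_ne_zero.mpr hxa)
        set v : EuclideanSpace ℝ (Fin d) := ‖x - a‖⁻¹ • (x - a) with hv
        have hvn : ‖v‖ = 1 := by
          rw [hv, norm_smul, norm_inv, norm_norm, inv_mul_cancel₀ hn.ne']
        obtain ⟨u, huN, hud⟩ := hNnet v hvn
        have h1 : ⟪u, x - a⟫ ≤ R + t := by
          have := key u huN
          have := hhigh u (hNsph u huN)
          linarith
        have h2 : ⟪v - u, x - a⟫ ≤ δ * ‖x - a‖ := by
          calc ⟪v - u, x - a⟫ ≤ ‖v - u‖ * ‖x - a‖ := real_inner_le_norm _ _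
            _ ≤ δ * ‖x - a‖ := by
                apply mul_le_mul_of_nonneg_right _ (norm_nonneg _)
                rwa [dist_eq_norm] at hud
        have h3 : ⟪v, x - a⟫ = ‖x - a‖ := by
          rw [hv, real_inner_smul_left, real_inner_self_eq_norm_sq]
          field_simp
        have h4 : ⟪v, x - a⟫ = ⟪u, x - a⟫ + ⟪v - u, x - a⟫ := by
          rw [inner_sub_left]; ring
        nlinarith
    -- projection
    by_cases hxG : x ∈ G
    · rw [infDist_zero_of_mem hxG]; exact hε0
    obtain ⟨p, hpG, hp⟩ := hGcomp.exists_infDist_eq_dist hGne x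
    have hpd : ∀ y ∈ G, dist x p ≤ dist x y := fun y hy =>
      hp ▸ infDist_le_dist_of_mem hy
    have hnp : 0 < ‖x - p‖ :=
      norm_pos_iff.mpr (sub_ne_zero.mpr (fun e => hxG (e ▸ hpG)))
    have hob : ∀ w ∈ G, ⟪x - p, w - p⟫ ≤ 0 := by
      rw [← norm_eq_iInf_iff_real_inner_le_zero hGconv hpG]
      haveI : Nonempty G := ⟨⟨a, haG⟩⟩
      apply le_antisymm
      · apply le_ciInf; intro w
        have := hpd w w.2
        rwa [dist_eq_norm, dist_eq_norm] at this
      · have hb : BddBelow (range fun w : G => ‖x - (w : EuclideanSpace ℝ (Fin d))‖) := by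
          refine ⟨0, ?_⟩
          rintro b ⟨w, rfl⟩
          exact norm_nonneg _
        exact ciInf_le hb ⟨p, hpG⟩
    set v : EuclideanSpace ℝ (Fin d) := ‖x - p‖⁻¹ • (x - p) with hv
    have hvn : ‖v‖ = 1 := by
      rw [hv, norm_smul, norm_inv, norm_norm, inv_mul_cancel₀ hnp.ne']
    -- h v ≤ ⟪v, p⟫
    have hvp : h v ≤ ⟪v, p⟫ := by
      apply hsup_le
      intro y hy
      have h1 : ⟪v, y - p⟫ ≤ 0 := by
        rw [hv, real_inner_smul_left]
        exact mul_nonpos_of_nonneg_of_nonpos (inv_nonneg.mpr (norm_nonneg _)) (hob y hy)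
      rw [inner_sub_right] at h1; linarith
    obtain ⟨u, huN, hud⟩ := hNnet v hvn
    -- Lipschitz: h u - ⟪u,a⟫ ≤ h v - ⟪v,a⟫ + R δ
    have hlip : h u - ⟪u, a⟫ ≤ h v - ⟪v, a⟫ + R * δ := by
      have : h u ≤ ⟪u, a⟫ + (h v - ⟪v, a⟫) + R * δ := by
        apply hsup_le
        intro y hy
        have h1 : ⟪v, y - a⟫ ≤ h v - ⟪v, a⟫ := by
          have := hle v y hy
          rw [inner_sub_right]; linarith
        have h2 : ⟪u - v, y - a⟫ ≤ δ * R := by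
          calc ⟪u - v, y - a⟫ ≤ ‖u - v‖ * ‖y - a‖ := real_inner_le_norm _ _
            _ ≤ δ * R := by
                apply mul_le_mul _ (hdistR y hy) (norm_nonneg _) hδ0.le
                rw [← norm_sub_rev, ← dist_eq_norm] at *
                exact hud
        have h3 : ⟪u, y - a⟫ = ⟪v, y - a⟫ + ⟪u - v, y - a⟫ := by
          rw [inner_sub_left]; ring
        rw [inner_sub_right] at h3
        nlinarith
      linarith
    have h1 : ⟪u, x - a⟫ ≤ h u - ⟪u, a⟫ + t := key u huN
    have h2 : ⟪v - u, x - a⟫ ≤ δ * (3 * R) := by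
      calc ⟪v - u, x - a⟫ ≤ ‖v - u‖ * ‖x - a‖ := real_inner_le_norm _ _
        _ ≤ δ * (3 * R) := by
            apply mul_le_mul _ hxa3R (norm_nonneg _) hδ0.le
            rwa [dist_eq_norm] at hud
    have h4 : ⟪v, x - a⟫ = ⟪u, x - a⟫ + ⟪v - u, x - a⟫ := by
      rw [inner_sub_left]; ring
    -- conclude
    have h5 : ⟪v, x⟫ - h v ≤ t + 4 * R * δ := by
      have e1 : ⟪v, x - a⟫ = ⟪v, x⟫ - ⟪v, a⟫ := inner_sub_right v x a
      linarith
    have h6 : infDist x G = ⟪v, x⟫ - ⟪v, p⟫ := by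
      rw [hp, dist_eq_norm, ← inner_sub_right]
      rw [hv, real_inner_smul_left, real_inner_self_eq_norm_sq]
      field_simp
    have h7 : infDist x G ≤ t + 4 * R * δ := by
      rw [h6]; linarith
    have h8 : t + 4 * R * δ ≤ ε := by
      rw [hε]
      have : t ≤ 3 * t * R / (2 * r) := by
        rw [le_div_iff₀ (by positivity)]
        nlinarith
      linarith
    linarith
  · -- G ⊆ Ĝ + ε
    intro x hxG
    set c : ℝ := (r - t) / r with hc
    set y : EuclideanSpace ℝ (Fin d) := a + c • (x - a) with hy
    have hc1 : c ≤ 1 := by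
      rw [hc, div_le_one hr]; linarith
    have hc0 : 0 ≤ c := by
      rw [hc]; apply div_nonneg _ hr.le; linarith
    have hyGhat : y ∈ Ghat := by
      intro u huN
      have hu1 : ‖u‖ = 1 := hNsph u huN
      have hH : r ≤ h u - ⟪u, a⟫ := by have := hlow u hu1; linarith
      have hcle : ⟪u, x - a⟫ ≤ h u - ⟪u, a⟫ := by
        have := hle u x hxG; rw [inner_sub_right]; linarith
      have h2 := abs_le.mp (ht u huN)
      change -t ≤ hhat u - h u ∧ hhat u - h u ≤ t at h2
      have hval : ⟪u, y⟫ = ⟪u, a⟫ + c * ⟪u, x - a⟫ := by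
        rw [hy, inner_add_right, real_inner_smul_right]
      -- (r - t) * ⟪u,x-a⟫ ≤ r * (h u - ⟪u,a⟫ - t)
      have hkey : (r - t) * ⟪u, x - a⟫ ≤ r * (h u - ⟪u, a⟫ - t) := by
        nlinarith [mul_le_mul_of_nonneg_left hcle (show (0:ℝ) ≤ r - t by linarith)]
      have : c * ⟪u, x - a⟫ ≤ h u - ⟪u, a⟫ - t := by
        rw [hc, div_mul_eq_mul_div, div_le_iff₀ hr]
        nlinarith
      rw [hval]; linarith [h2.2]
    have hxy : x - y = (1 - c) • (x - a) := by
      rw [hy]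
      module
    have hdxy : dist x y ≤ (1 - c) * R := by
      rw [dist_eq_norm, hxy, norm_smul, Real.norm_eq_abs, abs_of_nonneg (by linarith)]
      exact mul_le_mul_of_nonneg_left (hdistR x hxG) (by linarith)
    have h1c : 1 - c = t / r := by rw [hc]; field_simp; ring
    have hfin : (1 - c) * R ≤ ε := by
      rw [h1c, hε]
      have : t / r * R ≤ 3 * t * R / (2 * r) := by
        rw [div_mul_eq_mul_div, div_le_div_iff₀ hr (by positivity)]
        nlinarith [mul_nonneg (mul_nonneg ht0 hR.le) hr.le]
      nlinarith
    calc infDist x Ghat ≤ dist x y := infDist_le_dist_of_mem hyGhat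
      _ ≤ ε := le_trans hdxy hfin
end

section
/- Let τ ∈ (0,1], c > 0, C > 0, and let ψ₁, ψ₂, … be real-valued integrable functions on ℝ whose Fourier transforms satisfy |ℱ[ψ_j](t)| ≤ C e^{−c|t|^τ} for all t ∈ ℝ and all j. Then for every k ≥ 1 and all t ∈ ℝ: |ℱ[∏_{1≤j≤k} ψ_j](t)| ≤ C^k B^{k−1} e^{−c|t|^τ/2}, where B = ∫_ℝ e^{−c|s|^τ/2} ds. -/
open MeasureTheory Set

section Aux

open Real Complex FourierTransform
open scoped ContDiff NNReal

/-- The Fourier transform `ℱ[f](t) = ∫ e^{itx} f(x) dx` of an integrable function on `ℝ`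
(with the convention of the paper). -/
noncomputable def ft (f : ℝ → ℝ) (t : ℝ) : ℂ :=
  ∫ x : ℝ, Complex.exp (Complex.I * t * x) * f x

private lemma pow_div_le_exp (x : ℝ) (hx : 0 ≤ x) (n : ℕ) (hn : n ≠ 0) :
    (x / n) ^ n ≤ Real.exp x := by
  have h1 : (x / n) ^ n ≤ (1 + x / n) ^ n := by
    apply pow_le_pow_left₀ (by positivity)
    linarith
  have h2 : (1 + x / n) ^ n ≤ (Real.exp (x / n)) ^ n := by
    apply pow_le_pow_left₀ (by positivity)
    linarith [Real.add_one_le_exp (x / n)]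
  calc (x / n) ^ n ≤ (Real.exp (x / n)) ^ n := h1.trans h2
    _ = Real.exp (n * (x / n)) := by rw [← Real.exp_nat_mul]
    _ = Real.exp x := by rw [mul_div_cancel₀]; positivity

private lemma integrable_exp_neg_abs_rpow {a p : ℝ} (ha : 0 < a) (hp : 0 < p) :
    Integrable (fun s : ℝ => Real.exp (-a * |s| ^ p)) := by
  set n : ℕ := ⌈2 / p⌉₊ + 1 with hn
  have hn0 : (n : ℝ) ≠ 0 := by positivity
  have hnp : 2 ≤ p * n := by
    have h1 : 2 / p ≤ (n : ℝ) := (Nat.le_ceil _).trans (by exact_mod_cast Nat.le_succ _)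
    calc (2:ℝ) = p * (2 / p) := by field_simp
      _ ≤ p * n := by nlinarith
  set K : ℝ := 2 * max 1 ((n / a) ^ n) with hK
  have hK1 : (1:ℝ) ≤ max 1 ((n / a) ^ n) := le_max_left _ _
  have key : ∀ s : ℝ, 1 + s ^ 2 ≤ K * Real.exp (a * |s| ^ p) := by
    intro s
    have hexp1 : (1:ℝ) ≤ Real.exp (a * |s| ^ p) := Real.one_le_exp (by positivity)
    rcases le_or_gt (|s|) 1 with h | h
    · have : s ^ 2 ≤ 1 := by
        rw [← _root_.sq_abs]; nlinarith [abs_nonneg s]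
      nlinarith
    · have habs : (1:ℝ) ≤ |s| := h.le
      have h2 : s ^ 2 = |s| ^ (2:ℝ) := by
        rw [show ((2:ℝ)) = ((2:ℕ):ℝ) by norm_num, Real.rpow_natCast, _root_.sq_abs]
      have h3 : |s| ^ (2:ℝ) ≤ |s| ^ (p * n) := Real.rpow_le_rpow_of_exponent_le habs hnp
      have h4 : |s| ^ (p * n) = (|s| ^ p) ^ n := by
        rw [Real.rpow_mul (abs_nonneg s), Real.rpow_natCast]
      have h5 : (a * |s| ^ p / n) ^ n ≤ Real.exp (a * |s| ^ p) := by
        apply pow_div_le_exp _ (by positivity) _ (by positivity)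
      have h6 : (|s| ^ p) ^ n ≤ (n / a) ^ n * Real.exp (a * |s| ^ p) := by
        calc (|s| ^ p) ^ n = (n / a) ^ n * (a * |s| ^ p / n) ^ n := by
              rw [← mul_pow]; congr 1; field_simp
          _ ≤ (n / a) ^ n * Real.exp (a * |s| ^ p) := by
              apply mul_le_mul_of_nonneg_left h5 (by positivity)
      have h7 : (n / a) ^ n ≤ max 1 ((n / a) ^ n) := le_max_right _ _
      have h8 : s ^ 2 ≤ max 1 ((n / a) ^ n) * Real.exp (a * |s| ^ p) := by
        rw [h2]
        calc |s| ^ (2:ℝ) ≤ (|s| ^ p) ^ n := by rw [← h4]; exact h3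
          _ ≤ (n / a) ^ n * Real.exp (a * |s| ^ p) := h6
          _ ≤ max 1 ((n / a) ^ n) * Real.exp (a * |s| ^ p) := by
              apply mul_le_mul_of_nonneg_right h7 (Real.exp_nonneg _)
      have h9 : (1:ℝ) ≤ max 1 ((n / a) ^ n) * Real.exp (a * |s| ^ p) := by
        calc (1:ℝ) ≤ Real.exp (a * |s| ^ p) := hexp1
          _ = 1 * Real.exp (a * |s| ^ p) := (one_mul _).symm
          _ ≤ max 1 ((n / a) ^ n) * Real.exp (a * |s| ^ p) := by
              apply mul_le_mul_of_nonneg_right hK1 (Real.exp_nonneg _)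
      rw [hK]
      nlinarith
  apply Integrable.mono' ((integrable_inv_one_add_sq.const_mul K))
  · apply Continuous.aestronglyMeasurable
    exact Real.continuous_exp.comp
      (continuous_const.mul (continuous_abs.rpow_const fun x => Or.inr hp.le))
  · filter_upwards with s
    have h1 : (0:ℝ) < 1 + s ^ 2 := by positivity
    have h2 : (0:ℝ) < Real.exp (a * |s| ^ p) := Real.exp_pos _
    rw [Real.norm_eq_abs, _root_.abs_of_nonneg (Real.exp_nonneg _)]
    have h3 : Real.exp (-a * |s| ^ p) = (1 + s ^ 2) / Real.exp (a * |s| ^ p) * (1 + s^2)⁻¹ := by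
      rw [neg_mul, Real.exp_neg]
      field_simp
    rw [h3]
    apply mul_le_mul_of_nonneg_right _ (by positivity)
    rw [div_le_iff₀ h2]
    exact key s

private lemma mulflip (u v : ℝ → ℂ) (hu : Integrable u) (hv : Integrable v) :
    ∫ ξ, (𝓕 u) ξ * v ξ = ∫ x, u x * (𝓕 v) x := by
  have hflip : (innerₗ ℝ).flip = innerₗ ℝ := by
    apply LinearMap.ext₂
    intro x y
    exact real_inner_comm x y
  have := VectorFourier.integral_fourierIntegral_smul_eq_flip (L := innerₗ ℝ)
    Real.continuous_fourierChar continuous_inner hu hv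
  rw [hflip] at this
  simp only [smul_eq_mul] at this
  exact this

private noncomputable def toCSchwartz (φ : ℝ → ℝ) (h1 : ContDiff ℝ ∞ φ)
    (h2 : HasCompactSupport φ) : SchwartzMap ℝ ℂ where
  toFun := fun x => (φ x : ℂ)
  smooth' := Complex.ofRealCLM.contDiff.comp h1
  decay' := by
    intro k n
    have hsm : ContDiff ℝ ∞ (fun x => (φ x : ℂ)) := Complex.ofRealCLM.contDiff.comp h1
    have hcs : HasCompactSupport (fun x => (φ x : ℂ)) :=
      h2.comp_left (g := fun r : ℝ => (r : ℂ)) (by simp)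
    have hcs' : HasCompactSupport
        (fun x => ‖x‖ ^ k * ‖iteratedFDeriv ℝ n (fun x => (φ x : ℂ)) x‖) := by
      apply ((hcs.iteratedFDeriv n).norm.mul_left)
    have hcont : Continuous (fun x => ‖x‖ ^ k * ‖iteratedFDeriv ℝ n (fun x => (φ x : ℂ)) x‖) := by
      exact (continuous_norm.pow k).mul ((hsm.continuous_iteratedFDeriv (mod_cast le_top)).norm)
    obtain ⟨C, hC⟩ := hcont.bounded_above_of_compact_support hcs'
    refine ⟨C, fun x => ?_⟩
    have := hC x
    exact (le_abs_self _).trans (by rwa [Real.norm_eq_abs] at this)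

private lemma fourier_integrable_of_compact_support {φ : ℝ → ℝ} (h1 : ContDiff ℝ ∞ φ)
    (h2 : HasCompactSupport φ) : Integrable (𝓕 (fun x => (φ x : ℂ))) := by
  have : 𝓕 (fun x => (φ x : ℂ)) = 𝓕 (toCSchwartz φ h1 h2) := rfl
  rw [this]
  exact SchwartzMap.integrable _

private lemma invflip (u v : ℝ → ℂ) (hu : Integrable u) (hv : Integrable v) :
    ∫ ξ, (𝓕⁻ u) ξ * v ξ = ∫ x, u x * (𝓕⁻ v) x := by
  have h1 : (𝓕⁻ u) = 𝓕 (fun x => u (-x)) := Real.fourierInv_eq_fourier_comp_neg u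
  rw [h1, mulflip _ _ hu.comp_neg hv]
  rw [← MeasureTheory.integral_neg_eq_self (fun x => u (-x) * 𝓕 v x) volume]
  simp only [neg_neg]
  congr 1
  ext x
  rw [Real.fourierInv_eq_fourier_neg]

private lemma ae_fourier_inversion {g : ℝ → ℂ} (hg : Integrable g) (h'g : Integrable (𝓕 g)) :
    ∀ᵐ x : ℝ, g x = 𝓕⁻ (𝓕 g) x := by
  have hfc : ∀ (u : ℝ → ℂ), Integrable u → Continuous (𝓕 u) := fun u hu =>
    VectorFourier.fourierIntegral_continuous Real.continuous_fourierChar continuous_inner hu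
  have hcont : Continuous (𝓕⁻ (𝓕 g)) := by
    have : (𝓕⁻ (𝓕 g)) = fun w => 𝓕 (𝓕 g) (-w) :=
      funext fun w => Real.fourierInv_eq_fourier_neg (𝓕 g) w
    rw [this]
    exact (hfc _ h'g).comp continuous_neg
  apply ae_eq_of_integral_contDiff_smul_eq hg.locallyIntegrable hcont.locallyIntegrable
  intro φ hφ h2φ
  have hΦc : Continuous (fun x => (φ x : ℂ)) := Complex.continuous_ofReal.comp hφ.continuous
  have hΦcs : HasCompactSupport (fun x => (φ x : ℂ)) :=
    h2φ.comp_left (g := fun r : ℝ => (r : ℂ)) (by simp)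
  have hΦ : Integrable (fun x => (φ x : ℂ)) := hΦc.integrable_of_hasCompactSupport hΦcs
  have hFΦ : Integrable (𝓕 (fun x => (φ x : ℂ))) := fourier_integrable_of_compact_support hφ h2φ
  have hφ' : ContDiff ℝ ∞ (fun x : ℝ => φ (-x)) := hφ.comp contDiff_neg
  have h2φ' : HasCompactSupport (fun x : ℝ => φ (-x)) := by
    have := h2φ.comp_homeomorph (Homeomorph.neg ℝ)
    exact this
  have hFinvΦ : Integrable (𝓕⁻ (fun x => (φ x : ℂ))) := by
    have h1 : (𝓕⁻ (fun x => (φ x : ℂ))) = 𝓕 (fun x => ((φ (-x) : ℝ) : ℂ)) :=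
      Real.fourierInv_eq_fourier_comp_neg _
    rw [h1]
    exact fourier_integrable_of_compact_support hφ' h2φ'
  have hinv : 𝓕 (𝓕⁻ (fun x => (φ x : ℂ))) = (fun x => (φ x : ℂ)) :=
    hΦc.fourier_fourierInv_eq hΦ hFΦ
  simp only [Complex.real_smul]
  calc ∫ x, (φ x : ℂ) * g x
      = ∫ x, (𝓕 (𝓕⁻ (fun x => (φ x : ℂ)))) x * g x := by rw [hinv]
    _ = ∫ x, (𝓕⁻ (fun x => (φ x : ℂ))) x * 𝓕 g x := mulflip _ _ hFinvΦ hg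
    _ = ∫ x, 𝓕 g x * (𝓕⁻ (fun x => (φ x : ℂ))) x := by simp_rw [mul_comm]
    _ = ∫ x, (𝓕⁻ (𝓕 g)) x * (fun x => (φ x : ℂ)) x := (invflip _ _ h'g hΦ).symm
    _ = ∫ x, (φ x : ℂ) * (𝓕⁻ (𝓕 g)) x := by simp_rw [mul_comm]
  rfl

private lemma fourier_mul {f g : ℝ → ℂ} (hf : Integrable f) (hg : Integrable g)
    (hfg : Integrable (fun x => f x * g x)) (hFg : Integrable (𝓕 g)) (ξ : ℝ) :
    𝓕 (fun x => f x * g x) ξ = ∫ η, 𝓕 f (ξ - η) * 𝓕 g η := by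
  clear hfg
  have hinv := ae_fourier_inversion hg hFg
  have hinv' : ∀ x : ℝ, 𝓕⁻ (𝓕 g) x = ∫ η, Complex.exp (↑(2 * π * η * x) * Complex.I) * 𝓕 g η := by
    intro x
    rw [Real.fourierInv_eq_fourier_neg,
        Real.fourier_real_eq_integral_exp_smul]
    congr 1
    funext η
    rw [smul_eq_mul]
    congr 2
    push_cast
    ring
  have step1 : 𝓕 (fun x => f x * g x) ξ
      = ∫ x, Complex.exp (↑(-2 * π * x * ξ) * Complex.I) * (f x * 𝓕⁻ (𝓕 g) x) := by
    rw [Real.fourier_real_eq_integral_exp_smul]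
    apply integral_congr_ae
    filter_upwards [hinv] with x hx
    rw [smul_eq_mul, ← hx]
  rw [step1]
  have step2 : ∀ x : ℝ, Complex.exp (↑(-2 * π * x * ξ) * Complex.I) * (f x * 𝓕⁻ (𝓕 g) x)
      = ∫ η, Complex.exp (↑(-2 * π * x * ξ) * Complex.I) * f x *
          (Complex.exp (↑(2 * π * η * x) * Complex.I) * 𝓕 g η) := by
    intro x
    rw [hinv' x, ← mul_assoc, ← MeasureTheory.integral_const_mul]
  simp_rw [step2]
  have hI : Integrable (Function.uncurry fun x η =>
      Complex.exp (↑(-2 * π * x * ξ) * Complex.I) * f x *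
        (Complex.exp (↑(2 * π * η * x) * Complex.I) * 𝓕 g η)) (volume.prod volume) := by
    apply Integrable.mono' (hf.norm.mul_prod hFg.norm)
    · apply AEStronglyMeasurable.mul
      · apply AEStronglyMeasurable.mul
        · apply Continuous.aestronglyMeasurable
          fun_prop
        · exact hf.1.comp_fst
      · apply AEStronglyMeasurable.mul
        · apply Continuous.aestronglyMeasurable
          fun_prop
        · exact ((VectorFourier.fourierIntegral_continuous Real.continuous_fourierChar
            continuous_inner hg).comp continuous_snd).aestronglyMeasurable
    · filter_upwards with p
      rw [Function.uncurry_apply_pair]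
      simp [Complex.norm_exp]
  rw [MeasureTheory.integral_integral_swap hI]
  congr 1
  funext η
  calc ∫ x, Complex.exp (↑(-2 * π * x * ξ) * Complex.I) * f x *
          (Complex.exp (↑(2 * π * η * x) * Complex.I) * 𝓕 g η)
      = (∫ x, Complex.exp (↑(-2 * π * x * (ξ - η)) * Complex.I) * f x) * 𝓕 g η := by
        rw [← MeasureTheory.integral_mul_const]
        congr 1
        funext x
        have he : (↑(-2 * π * x * ξ) * Complex.I) + (↑(2 * π * η * x) * Complex.I)
            = ↑(-2 * π * x * (ξ - η)) * Complex.I := by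
          push_cast
          ring
        rw [← he, Complex.exp_add]
        ring
    _ = 𝓕 f (ξ - η) * 𝓕 g η := by
        rw [Real.fourier_real_eq_integral_exp_smul f (ξ - η)]
        congr 1

private lemma ft_eq (f : ℝ → ℝ) (t : ℝ) :
    ft f t = 𝓕 (fun x => (f x : ℂ)) (-t / (2 * π)) := by
  rw [ft, Real.fourier_real_eq_integral_exp_smul]
  congr 1
  funext x
  rw [smul_eq_mul]
  congr 1
  have hr : -2 * π * x * (-t / (2 * π)) = t * x := by
    field_simp
  rw [hr]
  push_cast
  ring

private lemma ftF (f : ℝ → ℝ) (w : ℝ) :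
    𝓕 (fun x => (f x : ℂ)) w = ft f (-(2 * π * w)) := by
  rw [ft_eq]
  congr 1
  field_simp

private lemma abs_rpow_add_le {p : ℝ} (hp0 : 0 < p) (hp1 : p ≤ 1) (x y : ℝ) :
    |x + y| ^ p ≤ |x| ^ p + |y| ^ p := by
  have h1 : |x + y| ^ p ≤ (|x| + |y|) ^ p :=
    Real.rpow_le_rpow (abs_nonneg _) (abs_add_le x y) hp0.le
  refine h1.trans ?_
  have h2 := NNReal.rpow_add_le_add_rpow (Real.toNNReal |x|) (Real.toNNReal |y|) hp0.le hp1
  have h3 : ((Real.toNNReal |x| + Real.toNNReal |y|) ^ p : ℝ≥0)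
      ≤ ((Real.toNNReal |x|) ^ p + (Real.toNNReal |y|) ^ p : ℝ≥0) := h2
  have := NNReal.coe_le_coe.mpr h3
  rw [NNReal.coe_add, NNReal.coe_rpow, NNReal.coe_rpow, NNReal.coe_rpow, NNReal.coe_add,
    Real.coe_toNNReal _ (abs_nonneg x), Real.coe_toNNReal _ (abs_nonneg y)] at this
  exact this

end Aux

open Real Complex FourierTransform

/-- If `|ℱ[ψ_j](t)| ≤ C e^{-c|t|^τ}` for all `j`, then the Fourier transform
of the product satisfies `|ℱ[∏_{j≤k} ψ_j](t)| ≤ C^k B^{k-1} e^{-c|t|^τ/2}` with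
`B = ∫ e^{-c|s|^τ/2} ds`. -/
theorem stmt_11
    (τ : ℝ) (hτ : τ ∈ Ioc (0:ℝ) 1) (c C : ℝ) (hc : 0 < c) (hC : 0 < C)
    (ψ : ℕ → ℝ → ℝ) (hint : ∀ j, Integrable (ψ j))
    (hprodint : ∀ k : ℕ, Integrable (fun x => ∏ j ∈ Finset.range k, ψ j x))
    (hft : ∀ j t, ‖ft (ψ j) t‖ ≤ C * Real.exp (-c * |t| ^ τ)) :
    ∀ k : ℕ, 1 ≤ k → ∀ t : ℝ,
      ‖ft (fun x => ∏ j ∈ Finset.range k, ψ j x) t‖ ≤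
        C ^ k * (∫ s : ℝ, Real.exp (-c * |s| ^ τ / 2)) ^ (k - 1) *
          Real.exp (-c * |t| ^ τ / 2) := by
  intro k hk
  obtain ⟨hτ0, hτ1⟩ := hτ
  set B : ℝ := ∫ s : ℝ, Real.exp (-c * |s| ^ τ / 2) with hBdef
  have hGfun : (fun s : ℝ => Real.exp (-c * |s| ^ τ / 2))
      = fun s : ℝ => Real.exp (-(c / 2) * |s| ^ τ) := by
    funext s
    ring_nf
  have hGint : Integrable (fun s : ℝ => Real.exp (-c * |s| ^ τ / 2)) := by
    rw [hGfun]
    exact integrable_exp_neg_abs_rpow (by positivity) hτ0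
  have hB0 : 0 ≤ B := integral_nonneg fun s => Real.exp_nonneg _
  -- monotonicity helper : |w| ≤ |v| gives exp(-c|v|^τ * θ) ≤ exp(-c|w|^τ * θ)
  have habs2pi : ∀ w : ℝ, |w| ^ τ ≤ |2 * π * w| ^ τ := by
    intro w
    apply Real.rpow_le_rpow (abs_nonneg _) _ hτ0.le
    rw [abs_mul, abs_of_pos (by positivity : (0:ℝ) < 2 * π)]
    nlinarith [abs_nonneg w, Real.pi_gt_three]
  -- bound for the Fourier transform (mathlib normalization) of each ψ j
  have hFj : ∀ (j : ℕ) (w : ℝ), ‖𝓕 (fun x => ((ψ j x : ℝ) : ℂ)) w‖ ≤ C * Real.exp (-c * |w| ^ τ) := by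
    intro j w
    rw [ftF (ψ j) w]
    refine (hft j _).trans ?_
    apply mul_le_mul_of_nonneg_left _ hC.le
    rw [Real.exp_le_exp, abs_neg]
    nlinarith [habs2pi w, hc]
  have hFjint : ∀ j : ℕ, Integrable (𝓕 (fun x => ((ψ j x : ℝ) : ℂ))) := by
    intro j
    apply Integrable.mono' ((integrable_exp_neg_abs_rpow hc hτ0).const_mul C)
    · exact (VectorFourier.fourierIntegral_continuous Real.continuous_fourierChar
        continuous_inner (hint j).ofReal).aestronglyMeasurable
    · filter_upwards with w
      exact hFj j w
  induction k, hk using Nat.le_induction with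
  | base =>
    intro t
    have h1 : (fun x : ℝ => ∏ j ∈ Finset.range 1, ψ j x) = ψ 0 := by
      funext x
      simp
    rw [h1]
    refine (hft 0 t).trans ?_
    simp only [pow_one, Nat.sub_self, pow_zero, mul_one]
    apply mul_le_mul_of_nonneg_left _ hC.le
    rw [Real.exp_le_exp]
    have : 0 ≤ c * |t| ^ τ := by positivity
    linarith
  | succ k hk IH =>
    intro t
    set ξ : ℝ := -t / (2 * π) with hξdef
    set F : ℝ → ℂ := fun x => ((∏ j ∈ Finset.range k, ψ j x : ℝ) : ℂ) with hFdef
    set G : ℝ → ℂ := fun x => ((ψ k x : ℝ) : ℂ) with hGdef2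
    have hFint : Integrable F := (hprodint k).ofReal
    have hGint2 : Integrable G := (hint k).ofReal
    have hsplit : (fun x : ℝ => ((∏ j ∈ Finset.range (k+1), ψ j x : ℝ) : ℂ))
        = fun x => F x * G x := by
      funext x
      rw [hFdef, hGdef2, Finset.prod_range_succ]
      push_cast
      ring
    have hFGprod : Integrable (fun x => F x * G x) := by
      rw [← hsplit]
      exact (hprodint (k+1)).ofReal
    have hFGint : Integrable (𝓕 G) := hFjint k
    have h1 : ft (fun x => ∏ j ∈ Finset.range (k+1), ψ j x) t = 𝓕 (fun x => F x * G x) ξ := by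
      rw [ft_eq, hsplit]
    have hIH' : ∀ η : ℝ, ‖𝓕 F (ξ - η)‖
        ≤ C ^ k * B ^ (k - 1) * Real.exp (-c * |t + 2 * π * η| ^ τ / 2) := by
      intro η
      have h2 : 𝓕 F (ξ - η) = ft (fun x => ∏ j ∈ Finset.range k, ψ j x) (-(2 * π * (ξ - η))) :=
        ftF _ _
      have h3 : -(2 * π * (ξ - η)) = t + 2 * π * η := by
        rw [hξdef]
        field_simp
        ring
      rw [h2, h3]
      exact IH (t + 2 * π * η)
    have hG' : ∀ η : ℝ, ‖𝓕 G η‖ ≤ C * Real.exp (-c * |2 * π * η| ^ τ) := by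
      intro η
      have h2 : 𝓕 G η = ft (ψ k) (-(2 * π * η)) := ftF _ _
      rw [h2]
      refine (hft k _).trans ?_
      rw [abs_neg]
    have hpos : 0 ≤ C ^ k * B ^ (k - 1) * Real.exp (-c * |t| ^ τ / 2) * C := by positivity
    have keybound : ∀ η : ℝ, ‖𝓕 F (ξ - η) * 𝓕 G η‖
        ≤ (C ^ k * B ^ (k - 1) * Real.exp (-c * |t| ^ τ / 2) * C) * Real.exp (-c * |η| ^ τ / 2) := by
      intro η
      rw [norm_mul]
      have hmul : ‖𝓕 F (ξ - η)‖ * ‖𝓕 G η‖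
          ≤ (C ^ k * B ^ (k - 1) * Real.exp (-c * |t + 2 * π * η| ^ τ / 2))
            * (C * Real.exp (-c * |2 * π * η| ^ τ)) :=
        mul_le_mul (hIH' η) (hG' η) (norm_nonneg _) (by positivity)
      refine hmul.trans ?_
      have hexp : Real.exp (-c * |t + 2 * π * η| ^ τ / 2) * Real.exp (-c * |2 * π * η| ^ τ)
          ≤ Real.exp (-c * |t| ^ τ / 2) * Real.exp (-c * |η| ^ τ / 2) := by
        rw [← Real.exp_add, ← Real.exp_add, Real.exp_le_exp]
        have i1 : |t| ^ τ ≤ |t + 2 * π * η| ^ τ + |2 * π * η| ^ τ := by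
          have h := abs_rpow_add_le hτ0 hτ1 (t + 2 * π * η) (-(2 * π * η))
          rw [show t + 2 * π * η + -(2 * π * η) = t by ring, abs_neg] at h
          exact h
        have i2 : |η| ^ τ ≤ |2 * π * η| ^ τ := habs2pi η
        nlinarith [hc]
      calc C ^ k * B ^ (k - 1) * Real.exp (-c * |t + 2 * π * η| ^ τ / 2)
            * (C * Real.exp (-c * |2 * π * η| ^ τ))
          = (C ^ k * B ^ (k - 1) * C) * (Real.exp (-c * |t + 2 * π * η| ^ τ / 2)
            * Real.exp (-c * |2 * π * η| ^ τ)) := by ring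
        _ ≤ (C ^ k * B ^ (k - 1) * C) * (Real.exp (-c * |t| ^ τ / 2)
            * Real.exp (-c * |η| ^ τ / 2)) := by
            apply mul_le_mul_of_nonneg_left hexp (by positivity)
        _ = (C ^ k * B ^ (k - 1) * Real.exp (-c * |t| ^ τ / 2) * C)
            * Real.exp (-c * |η| ^ τ / 2) := by ring
    have hmajint : Integrable (fun η : ℝ =>
        (C ^ k * B ^ (k - 1) * Real.exp (-c * |t| ^ τ / 2) * C) * Real.exp (-c * |η| ^ τ / 2)) :=
      hGint.const_mul _
    calc ‖ft (fun x => ∏ j ∈ Finset.range (k+1), ψ j x) t‖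
        = ‖∫ η, 𝓕 F (ξ - η) * 𝓕 G η‖ := by
          rw [h1, fourier_mul hFint hGint2 hFGprod hFGint]
      _ ≤ ∫ η, ‖𝓕 F (ξ - η) * 𝓕 G η‖ := norm_integral_le_integral_norm _
      _ ≤ ∫ η, (C ^ k * B ^ (k - 1) * Real.exp (-c * |t| ^ τ / 2) * C)
            * Real.exp (-c * |η| ^ τ / 2) := by
          apply integral_mono_of_nonneg (ae_of_all _ fun η => norm_nonneg _) hmajint
          exact ae_of_all _ keybound
      _ = (C ^ k * B ^ (k - 1) * Real.exp (-c * |t| ^ τ / 2) * C) * B := by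
          rw [MeasureTheory.integral_const_mul]
      _ = C ^ (k + 1) * B ^ (k + 1 - 1) * Real.exp (-c * |t| ^ τ / 2) := by
          have hBk : B ^ (k - 1) * B = B ^ k := by
            rw [← pow_succ, Nat.sub_add_cancel hk]
          rw [Nat.add_sub_cancel, ← hBk]
          ring
end

section
/- If ψ is a smooth function on ℝ supported in [−1/2, 1/2] with ‖ψ‖_∞ ≤ 1, ‖ψ′‖_∞ ≤ 2/(1−τ), ‖ψ″‖_∞ ≤ 8/(1−τ)² for some τ ∈ (0,1), and g : ℝ → ℝ is twice differentiable with max_{x ∈ [−δ,δ]} g″(x) < 0, then setting h_m(x) = ψ(x) sin(γ_m x), H_m(x₁,…,x_{d−1}) = ∏_{k=1}^{d−1} h_m(x_k), and b_ω(x₁,…,x_{d−1}) = Σ_{k=1}^{d−1} g(x_k) + ω (L/γ_m²) H_m(x₁,…,x_{d−1}) for ω ∈ {−1,+1}, there exists L > 0, depending only on τ and γ_m (and max_{[−δ,δ]} g″), such that the sets G_ω = {(x₁,…,x_d) ∈ [−δ,δ]^{d−1} × ℝ : −δ ≤ x_d ≤ b_ω(x₁,…,x_{d−1})} are convex. Specifically,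 it suffices that (L/γ_m²)[8/(1−τ)² + 4γ_m/(1−τ) + γ_m²] ≤ −(1/2) max_{x∈[−δ,δ]} g″(x), in which case the Hessian of b_ω is negative semidefinite on [−δ,δ]^{d−1}. -/
open Set

section Aux

/-- Concavity along a segment for `t ↦ Σ g(x k + t v k) + cc * Π h(x k + t v k)`. -/
lemma stmt13_seg {n : ℕ} {δ B1 B2 gmax cc : ℝ}
    (g g1 g2 h h1 h2 : ℝ → ℝ)
    (Hg1 : ∀ u, HasDerivAt g (g1 u) u) (Hg2 : ∀ u, HasDerivAt g1 (g2 u) u)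
    (Hh1 : ∀ u, HasDerivAt h (h1 u) u) (Hh2 : ∀ u, HasDerivAt h1 (h2 u) u)
    (hb0 : ∀ u, |h u| ≤ 1) (hb1 : ∀ u, |h1 u| ≤ B1) (hb2 : ∀ u, |h2 u| ≤ B2)
    (hg2 : ∀ u ∈ Set.Icc (-δ) δ, g2 u ≤ gmax)
    (hcc : gmax + |cc| * (B2 + n * B1 ^ 2) ≤ 0)
    (x v : Fin n → ℝ)
    (hxv : ∀ (k : Fin n), ∀ t ∈ Set.Icc (0:ℝ) 1, x k + t * v k ∈ Set.Icc (-δ) δ) :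
    ConcaveOn ℝ (Set.Icc (0:ℝ) 1)
      (fun t => (∑ k, g (x k + t * v k)) + cc * ∏ k, h (x k + t * v k)) := by
  have hB1 : 0 ≤ B1 := le_trans (abs_nonneg _) (hb1 0)
  have hB2 : 0 ≤ B2 := le_trans (abs_nonneg _) (hb2 0)
  have Hℓ : ∀ (k : Fin n) (t : ℝ), HasDerivAt (fun t => x k + t * v k) (v k) t := fun k t =>
    (hasDerivAt_mul_const (v k)).const_add (x k)
  have Hgl : ∀ (k : Fin n) (t : ℝ),
      HasDerivAt (fun t => g (x k + t * v k)) (g1 (x k + t * v k) * v k) t :=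
    fun k t => (Hg1 _).comp t (Hℓ k t)
  have Hg1l : ∀ (k : Fin n) (t : ℝ),
      HasDerivAt (fun t => g1 (x k + t * v k)) (g2 (x k + t * v k) * v k) t :=
    fun k t => (Hg2 _).comp t (Hℓ k t)
  have Hhl : ∀ (k : Fin n) (t : ℝ),
      HasDerivAt (fun t => h (x k + t * v k)) (h1 (x k + t * v k) * v k) t :=
    fun k t => (Hh1 _).comp t (Hℓ k t)
  have Hh1l : ∀ (k : Fin n) (t : ℝ),
      HasDerivAt (fun t => h1 (x k + t * v k)) (h2 (x k + t * v k) * v k) t :=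
    fun k t => (Hh2 _).comp t (Hℓ k t)
  have HPe : ∀ (k : Fin n) (t : ℝ),
      HasDerivAt (fun t => ∏ j ∈ Finset.univ.erase k, h (x j + t * v j))
        (∑ l ∈ Finset.univ.erase k,
          (∏ j ∈ (Finset.univ.erase k).erase l, h (x j + t * v j)) *
            (h1 (x l + t * v l) * v l)) t := by
    intro k t
    simpa [smul_eq_mul] using HasDerivAt.fun_finsetProd (u := Finset.univ.erase k)
      (f := fun j t => h (x j + t * v j)) (f' := fun j => h1 (x j + t * v j) * v j) (x := t)
      (fun j _ => Hhl j t)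
  have HP : ∀ t : ℝ, HasDerivAt (fun t => ∏ k, h (x k + t * v k))
      (∑ k, (∏ j ∈ Finset.univ.erase k, h (x j + t * v j)) * (h1 (x k + t * v k) * v k)) t := by
    intro t
    simpa [smul_eq_mul] using HasDerivAt.fun_finsetProd (u := Finset.univ)
      (f := fun k t => h (x k + t * v k)) (f' := fun k => h1 (x k + t * v k) * v k) (x := t)
      (fun k _ => Hhl k t)
  have Hφ1 : ∀ t : ℝ,
      HasDerivAt (fun t => (∑ k, g (x k + t * v k)) + cc * ∏ k, h (x k + t * v k))
        ((∑ k, g1 (x k + t * v k) * v k)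
          + cc * ∑ k, (∏ j ∈ Finset.univ.erase k, h (x j + t * v j)) *
              (h1 (x k + t * v k) * v k)) t :=
    fun t => (HasDerivAt.fun_sum fun k _ => Hgl k t).add ((HP t).const_mul cc)
  have Hφ2 : ∀ t : ℝ,
      HasDerivAt (fun t => (∑ k, g1 (x k + t * v k) * v k)
          + cc * ∑ k, (∏ j ∈ Finset.univ.erase k, h (x j + t * v j)) *
              (h1 (x k + t * v k) * v k))
        ((∑ k, g2 (x k + t * v k) * v k * v k)
          + cc * ∑ k,
            ((∑ l ∈ Finset.univ.erase k,
                (∏ j ∈ (Finset.univ.erase k).erase l, h (x j + t * v j)) *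
                  (h1 (x l + t * v l) * v l)) * (h1 (x k + t * v k) * v k)
              + (∏ j ∈ Finset.univ.erase k, h (x j + t * v j)) *
                  (h2 (x k + t * v k) * v k * v k))) t :=
    fun t => (HasDerivAt.fun_sum fun k _ => (Hg1l k t).mul_const (v k)).add
      ((HasDerivAt.fun_sum fun k _ =>
        (HPe k t).mul ((Hh1l k t).mul_const (v k))).const_mul cc)
  -- the second derivative is nonpositive on [0,1]
  have hbound : ∀ t ∈ Set.Icc (0:ℝ) 1,
      (∑ k, g2 (x k + t * v k) * v k * v k)
        + cc * ∑ k,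
          ((∑ l ∈ Finset.univ.erase k,
              (∏ j ∈ (Finset.univ.erase k).erase l, h (x j + t * v j)) *
                (h1 (x l + t * v l) * v l)) * (h1 (x k + t * v k) * v k)
            + (∏ j ∈ Finset.univ.erase k, h (x j + t * v j)) *
                (h2 (x k + t * v k) * v k * v k)) ≤ 0 := by
    intro t ht
    have hSnn : (0:ℝ) ≤ ∑ k, v k ^ 2 := Finset.sum_nonneg fun k _ => sq_nonneg _
    have hWnn : (0:ℝ) ≤ ∑ k, |v k| := Finset.sum_nonneg fun k _ => abs_nonneg _
    have hW2 : (∑ k, |v k|) ^ 2 ≤ n * ∑ k, v k ^ 2 := by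
      have := sq_sum_le_card_mul_sum_sq (s := Finset.univ) (f := fun k : Fin n => |v k|)
      simpa [sq_abs] using this
    have hA : (∑ k, g2 (x k + t * v k) * v k * v k) ≤ gmax * ∑ k, v k ^ 2 := by
      rw [Finset.mul_sum]
      refine Finset.sum_le_sum fun k _ => ?_
      have hg := hg2 _ (hxv k t ht)
      nlinarith [sq_nonneg (v k)]
    have habs1 : ∀ k : Fin n, |∏ j ∈ Finset.univ.erase k, h (x j + t * v j)| ≤ 1 := by
      intro k
      rw [Finset.abs_prod]
      exact Finset.prod_le_one (fun j _ => abs_nonneg _) (fun j _ => hb0 _)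
    have habs2 : ∀ k l : Fin n,
        |∏ j ∈ (Finset.univ.erase k).erase l, h (x j + t * v j)| ≤ 1 := by
      intro k l
      rw [Finset.abs_prod]
      exact Finset.prod_le_one (fun j _ => abs_nonneg _) (fun j _ => hb0 _)
    have hU : ∀ k : Fin n,
        |∑ l ∈ Finset.univ.erase k,
          (∏ j ∈ (Finset.univ.erase k).erase l, h (x j + t * v j)) *
            (h1 (x l + t * v l) * v l)| ≤ B1 * ∑ l, |v l| := by
      intro k
      calc |∑ l ∈ Finset.univ.erase k,
            (∏ j ∈ (Finset.univ.erase k).erase l, h (x j + t * v j)) *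
              (h1 (x l + t * v l) * v l)|
          ≤ ∑ l ∈ Finset.univ.erase k,
            |(∏ j ∈ (Finset.univ.erase k).erase l, h (x j + t * v j)) *
              (h1 (x l + t * v l) * v l)| := Finset.abs_sum_le_sum_abs _ _
        _ ≤ ∑ l ∈ Finset.univ.erase k, B1 * |v l| := by
            refine Finset.sum_le_sum fun l _ => ?_
            rw [abs_mul, abs_mul]
            calc |∏ j ∈ (Finset.univ.erase k).erase l, h (x j + t * v j)| *
                  (|h1 (x l + t * v l)| * |v l|)
                ≤ 1 * (|h1 (x l + t * v l)| * |v l|) :=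
                  mul_le_mul_of_nonneg_right (habs2 k l) (by positivity)
              _ = |h1 (x l + t * v l)| * |v l| := one_mul _
              _ ≤ B1 * |v l| := mul_le_mul_of_nonneg_right (hb1 _) (abs_nonneg _)
        _ ≤ ∑ l, B1 * |v l| :=
            Finset.sum_le_sum_of_subset_of_nonneg (Finset.subset_univ _)
              (fun l _ _ => by positivity)
        _ = B1 * ∑ l, |v l| := (Finset.mul_sum _ _ _).symm
    have hT : ∀ k : Fin n,
        |(∑ l ∈ Finset.univ.erase k,
            (∏ j ∈ (Finset.univ.erase k).erase l, h (x j + t * v j)) *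
              (h1 (x l + t * v l) * v l)) * (h1 (x k + t * v k) * v k)
          + (∏ j ∈ Finset.univ.erase k, h (x j + t * v j)) *
              (h2 (x k + t * v k) * v k * v k)|
          ≤ B1 ^ 2 * (∑ l, |v l|) * |v k| + B2 * v k ^ 2 := by
      intro k
      have e1 : |(∑ l ∈ Finset.univ.erase k,
            (∏ j ∈ (Finset.univ.erase k).erase l, h (x j + t * v j)) *
              (h1 (x l + t * v l) * v l)) * (h1 (x k + t * v k) * v k)|
          ≤ B1 ^ 2 * (∑ l, |v l|) * |v k| := by
        rw [abs_mul, abs_mul]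
        calc |∑ l ∈ Finset.univ.erase k,
              (∏ j ∈ (Finset.univ.erase k).erase l, h (x j + t * v j)) *
                (h1 (x l + t * v l) * v l)| * (|h1 (x k + t * v k)| * |v k|)
            ≤ (B1 * ∑ l, |v l|) * (B1 * |v k|) := by
              refine mul_le_mul (hU k) ?_ (by positivity) (by positivity)
              exact mul_le_mul_of_nonneg_right (hb1 _) (abs_nonneg _)
          _ = B1 ^ 2 * (∑ l, |v l|) * |v k| := by ring
      have e2 : |(∏ j ∈ Finset.univ.erase k, h (x j + t * v j)) *
            (h2 (x k + t * v k) * v k * v k)| ≤ B2 * v k ^ 2 := by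
        rw [abs_mul, abs_mul, abs_mul]
        calc |∏ j ∈ Finset.univ.erase k, h (x j + t * v j)| *
              (|h2 (x k + t * v k)| * |v k| * |v k|)
            ≤ 1 * (|h2 (x k + t * v k)| * |v k| * |v k|) :=
              mul_le_mul_of_nonneg_right (habs1 k) (by positivity)
          _ = |h2 (x k + t * v k)| * (|v k| * |v k|) := by ring
          _ ≤ B2 * (|v k| * |v k|) :=
              mul_le_mul_of_nonneg_right (hb2 _) (by positivity)
          _ = B2 * v k ^ 2 := by rw [abs_mul_abs_self]; ring
      calc _ ≤ _ := abs_add_le _ _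
        _ ≤ B1 ^ 2 * (∑ l, |v l|) * |v k| + B2 * v k ^ 2 := add_le_add e1 e2
    have hTsum : |∑ k,
        ((∑ l ∈ Finset.univ.erase k,
            (∏ j ∈ (Finset.univ.erase k).erase l, h (x j + t * v j)) *
              (h1 (x l + t * v l) * v l)) * (h1 (x k + t * v k) * v k)
          + (∏ j ∈ Finset.univ.erase k, h (x j + t * v j)) *
              (h2 (x k + t * v k) * v k * v k))|
        ≤ (B2 + n * B1 ^ 2) * ∑ k, v k ^ 2 := by
      have e3 : |∑ k,
          ((∑ l ∈ Finset.univ.erase k,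
              (∏ j ∈ (Finset.univ.erase k).erase l, h (x j + t * v j)) *
                (h1 (x l + t * v l) * v l)) * (h1 (x k + t * v k) * v k)
            + (∏ j ∈ Finset.univ.erase k, h (x j + t * v j)) *
                (h2 (x k + t * v k) * v k * v k))|
          ≤ B1 ^ 2 * (∑ l, |v l|) * (∑ k, |v k|) + B2 * ∑ k, v k ^ 2 := by
        calc _ ≤ _ := Finset.abs_sum_le_sum_abs _ _
          _ ≤ ∑ k, (B1 ^ 2 * (∑ l, |v l|) * |v k| + B2 * v k ^ 2) :=
              Finset.sum_le_sum fun k _ => hT k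
          _ = B1 ^ 2 * (∑ l, |v l|) * (∑ k, |v k|) + B2 * ∑ k, v k ^ 2 := by
              rw [Finset.sum_add_distrib, ← Finset.mul_sum, ← Finset.mul_sum]
      have e4 : B1 ^ 2 * (∑ l, |v l|) * (∑ k, |v k|) ≤ B1 ^ 2 * (n * ∑ k, v k ^ 2) := by
        have := mul_le_mul_of_nonneg_left hW2 (sq_nonneg B1)
        nlinarith
      nlinarith
    have hccS : (gmax + |cc| * (B2 + n * B1 ^ 2)) * ∑ k, v k ^ 2 ≤ 0 :=
      mul_nonpos_iff.mpr (Or.inr ⟨hcc, hSnn⟩)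
    have hcT : cc * ∑ k,
        ((∑ l ∈ Finset.univ.erase k,
            (∏ j ∈ (Finset.univ.erase k).erase l, h (x j + t * v j)) *
              (h1 (x l + t * v l) * v l)) * (h1 (x k + t * v k) * v k)
          + (∏ j ∈ Finset.univ.erase k, h (x j + t * v j)) *
              (h2 (x k + t * v k) * v k * v k))
        ≤ |cc| * ((B2 + n * B1 ^ 2) * ∑ k, v k ^ 2) := by
      refine le_trans (le_abs_self _) ?_
      rw [abs_mul]
      exact mul_le_mul_of_nonneg_left hTsum (abs_nonneg cc)
    nlinarith
  refine concaveOn_of_hasDerivWithinAt2_nonpos (convex_Icc 0 1)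
    (fun t _ => (Hφ1 t).continuousAt.continuousWithinAt)
    (fun t _ => (Hφ1 t).hasDerivWithinAt)
    (fun t _ => (Hφ2 t).hasDerivWithinAt) ?_
  intro t ht
  rw [interior_Icc] at ht
  exact hbound t (Set.Ioo_subset_Icc_self ht)

/-- Convexity of the hypograph-type set, given uniform bounds on `h, h', h''` and `g''`. -/
lemma stmt13_key {n : ℕ} {δ B1 B2 gmax cc : ℝ}
    (g g1 g2 h h1 h2 : ℝ → ℝ)
    (Hg1 : ∀ u, HasDerivAt g (g1 u) u) (Hg2 : ∀ u, HasDerivAt g1 (g2 u) u)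
    (Hh1 : ∀ u, HasDerivAt h (h1 u) u) (Hh2 : ∀ u, HasDerivAt h1 (h2 u) u)
    (hb0 : ∀ u, |h u| ≤ 1) (hb1 : ∀ u, |h1 u| ≤ B1) (hb2 : ∀ u, |h2 u| ≤ B2)
    (hg2 : ∀ u ∈ Set.Icc (-δ) δ, g2 u ≤ gmax)
    (hcc : gmax + |cc| * (B2 + n * B1 ^ 2) ≤ 0) :
    Convex ℝ {p : (Fin n → ℝ) × ℝ | (∀ k, p.1 k ∈ Set.Icc (-δ) δ) ∧ -δ ≤ p.2 ∧
      p.2 ≤ (∑ k, g (p.1 k)) + cc * ∏ k, h (p.1 k)} := by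
  rintro ⟨x, s⟩ ⟨hx, hs, hsle⟩ ⟨y, r⟩ ⟨hy, hr, hrle⟩ a b ha hb hab
  have ha1 : a = 1 - b := by linarith
  subst ha1
  have hxv : ∀ (k : Fin n), ∀ t ∈ Set.Icc (0:ℝ) 1,
      x k + t * (y k - x k) ∈ Set.Icc (-δ) δ := by
    intro k t ht
    have h1' := (hx k).1; have h2' := (hx k).2
    have h3' := (hy k).1; have h4' := (hy k).2
    constructor <;> nlinarith [ht.1, ht.2]
  have hconc := stmt13_seg g g1 g2 h h1 h2 Hg1 Hg2 Hh1 Hh2 hb0 hb1 hb2 hg2 hcc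
    x (fun k => y k - x k) hxv
  have hkey := hconc.2 (Set.left_mem_Icc.mpr zero_le_one) (Set.right_mem_Icc.mpr zero_le_one)
    ha hb hab
  have e0 : ∀ k : Fin n, x k + 0 * (y k - x k) = x k := fun k => by ring
  have e1 : ∀ k : Fin n, x k + 1 * (y k - x k) = y k := fun k => by ring
  simp only [smul_eq_mul, mul_zero, mul_one, zero_add] at hkey
  simp only [e0, e1] at hkey
  simp only [Set.mem_setOf_eq, Prod.smul_mk, Prod.mk_add_mk, Pi.add_apply, Pi.smul_apply,
    smul_eq_mul]
  refine ⟨?_, ?_, ?_⟩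
  · intro k
    have e : (1 - b) * x k + b * y k = x k + b * (y k - x k) := by ring
    rw [e]
    exact hxv k b ⟨hb, by linarith⟩
  · nlinarith [mul_le_mul_of_nonneg_left hs ha, mul_le_mul_of_nonneg_left hr hb]
  · have e : ∀ k : Fin n, (1 - b) * x k + b * y k = x k + b * (y k - x k) := fun k => by ring
    simp only [e]
    calc (1 - b) * s + b * r
        ≤ (1 - b) * ((∑ k, g (x k)) + cc * ∏ k, h (x k))
          + b * ((∑ k, g (y k)) + cc * ∏ k, h (y k)) :=
          add_le_add (mul_le_mul_of_nonneg_left hsle ha) (mul_le_mul_of_nonneg_left hrle hb)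
      _ ≤ _ := hkey

end Aux

/-- If `ψ` is a smooth bump supported in `[-1/2, 1/2]` with
`‖ψ‖_∞ ≤ 1`, `‖ψ'‖_∞ ≤ 2/(1-τ)`, `‖ψ''‖_∞ ≤ 8/(1-τ)²`, and `g` is twice differentiable with
`max_{[-δ,δ]} g'' < 0`, then there is `L > 0` with
`(L/γ²)[8/(1-τ)² + 4γ/(1-τ) + γ²] ≤ -(1/2) max g''`, for which the hypograph-type sets
`G_ω` (for ω = ±1) are convex. -/
theorem stmt_13
    (d : ℕ) (hd : 2 ≤ d) (τ δ γ : ℝ) (hτ : τ ∈ Ioo (0:ℝ) 1) (hδ : 0 < δ) (hγ : 0 < γ)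
    (ψ : ℝ → ℝ) (hψsmooth : ContDiff ℝ (⊤ : ℕ∞) ψ)
    (hψsupp : Function.support ψ ⊆ Icc (-(1/2) : ℝ) (1/2))
    (hψ0 : ∀ x, |ψ x| ≤ 1) (hψ1 : ∀ x, |deriv ψ x| ≤ 2 / (1 - τ))
    (hψ2 : ∀ x, |deriv (deriv ψ) x| ≤ 8 / (1 - τ) ^ 2)
    (g : ℝ → ℝ) (hg : ContDiff ℝ 2 g)
    (gmax : ℝ) (hgmax : gmax = sSup ((fun x => deriv (deriv g) x) '' Icc (-δ) δ))
    (hgneg : gmax < 0) :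
    ∃ L : ℝ, 0 < L ∧
      L / γ ^ 2 * (8 / (1 - τ) ^ 2 + 4 * γ / (1 - τ) + γ ^ 2) ≤ -(1/2) * gmax ∧
      ∀ ω : ℝ, ω = 1 ∨ ω = -1 →
        Convex ℝ {p : (Fin (d - 1) → ℝ) × ℝ |
          (∀ k, p.1 k ∈ Icc (-δ) δ) ∧ -δ ≤ p.2 ∧
          p.2 ≤ (∑ k : Fin (d - 1), g (p.1 k)) +
            ω * (L / γ ^ 2) * ∏ k : Fin (d - 1), ψ (p.1 k) * Real.sin (γ * p.1 k)} := by
  have hτ1 : 0 < 1 - τ := by linarith [hτ.2]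
  -- regularity of ψ
  have hψ3 : ContDiff ℝ 3 ψ := hψsmooth.of_le (by exact WithTop.coe_le_coe.mpr (le_top : (3 : ℕ∞) ≤ ⊤))
  have hψd : Differentiable ℝ ψ := hψ3.differentiable (by norm_num)
  have hψc2 : ContDiff ℝ 2 (deriv ψ) := by
    have : ContDiff ℝ ((2:ℕ) + 1) ψ := by exact_mod_cast hψ3
    exact (contDiff_succ_iff_deriv.mp this).2.2
  have hψd1 : Differentiable ℝ (deriv ψ) := hψc2.differentiable (by norm_num)
  -- regularity of g
  have hgd : Differentiable ℝ g := hg.differentiable (by norm_num)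
  have hgc1 : ContDiff ℝ 1 (deriv g) := by
    have : ContDiff ℝ ((1:ℕ) + 1) g := by exact_mod_cast hg
    exact (contDiff_succ_iff_deriv.mp this).2.2
  have hgd1 : Differentiable ℝ (deriv g) := hgc1.differentiable (by norm_num)
  have hg2cont : Continuous (deriv (deriv g)) := hgc1.continuous_deriv le_rfl
  have hg2le : ∀ u ∈ Icc (-δ) δ, deriv (deriv g) u ≤ gmax := by
    intro u hu
    rw [hgmax]
    exact le_csSup ((isCompact_Icc.image_of_continuousOn hg2cont.continuousOn).bddAbove)
      (mem_image_of_mem _ hu)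
  -- the bump-times-sine and its derivatives
  set h : ℝ → ℝ := fun u => ψ u * Real.sin (γ * u) with hh
  set h1 : ℝ → ℝ := fun u => deriv ψ u * Real.sin (γ * u) + ψ u * (Real.cos (γ * u) * γ)
    with hh1
  set h2 : ℝ → ℝ := fun u =>
    (deriv (deriv ψ) u * Real.sin (γ * u) + deriv ψ u * (Real.cos (γ * u) * γ))
      + (deriv ψ u * (Real.cos (γ * u) * γ) + ψ u * (-Real.sin (γ * u) * γ * γ)) with hh2
  have Hsin : ∀ u : ℝ, HasDerivAt (fun u => Real.sin (γ * u)) (Real.cos (γ * u) * γ) u := by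
    intro u
    simpa [Function.comp_def] using (Real.hasDerivAt_sin (γ * u)).comp u ((hasDerivAt_id u).const_mul γ)
  have Hcos : ∀ u : ℝ, HasDerivAt (fun u => Real.cos (γ * u) * γ) (-Real.sin (γ * u) * γ * γ) u := by
    intro u
    have : HasDerivAt (fun u => Real.cos (γ * u)) (-Real.sin (γ * u) * γ) u := by
      simpa [Function.comp_def] using (Real.hasDerivAt_cos (γ * u)).comp u ((hasDerivAt_id u).const_mul γ)
    exact this.mul_const γ
  have Hh1 : ∀ u, HasDerivAt h (h1 u) u := fun u =>
    ((hψd u).hasDerivAt).mul (Hsin u)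
  have Hh2 : ∀ u, HasDerivAt h1 (h2 u) u := fun u =>
    (((hψd1 u).hasDerivAt).mul (Hsin u)).add (((hψd u).hasDerivAt).mul (Hcos u))
  -- derivative bounds for h
  set B1 : ℝ := 2 / (1 - τ) + γ with hB1def
  set B2 : ℝ := 8 / (1 - τ) ^ 2 + 4 * γ / (1 - τ) + γ ^ 2 with hB2def
  have hb0 : ∀ u, |h u| ≤ 1 := by
    intro u
    rw [hh, abs_mul]
    calc |ψ u| * |Real.sin (γ * u)| ≤ 1 * 1 :=
        mul_le_mul (hψ0 u) (Real.abs_sin_le_one _) (abs_nonneg _) zero_le_one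
      _ = 1 := one_mul 1
  have habsγ : |γ| = γ := abs_of_pos hγ
  have hb1 : ∀ u, |h1 u| ≤ B1 := by
    intro u
    have e1 : |deriv ψ u * Real.sin (γ * u)| ≤ 2 / (1 - τ) := by
      rw [abs_mul]
      calc |deriv ψ u| * |Real.sin (γ * u)| ≤ (2 / (1 - τ)) * 1 :=
          mul_le_mul (hψ1 u) (Real.abs_sin_le_one _) (abs_nonneg _) (by positivity)
        _ = 2 / (1 - τ) := mul_one _
    have e2 : |ψ u * (Real.cos (γ * u) * γ)| ≤ γ := by
      rw [abs_mul, abs_mul, habsγ]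
      calc |ψ u| * (|Real.cos (γ * u)| * γ) ≤ 1 * (1 * γ) :=
          mul_le_mul (hψ0 u) (mul_le_mul_of_nonneg_right (Real.abs_cos_le_one _) hγ.le)
            (by positivity) zero_le_one
        _ = γ := by ring
    calc |h1 u| ≤ |deriv ψ u * Real.sin (γ * u)| + |ψ u * (Real.cos (γ * u) * γ)| := abs_add_le _ _
      _ ≤ B1 := by rw [hB1def]; linarith
  have hb2 : ∀ u, |h2 u| ≤ B2 := by
    intro u
    have e1 : |deriv (deriv ψ) u * Real.sin (γ * u)| ≤ 8 / (1 - τ) ^ 2 := by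
      rw [abs_mul]
      calc |deriv (deriv ψ) u| * |Real.sin (γ * u)| ≤ (8 / (1 - τ) ^ 2) * 1 :=
          mul_le_mul (hψ2 u) (Real.abs_sin_le_one _) (abs_nonneg _) (by positivity)
        _ = 8 / (1 - τ) ^ 2 := mul_one _
    have e2 : |deriv ψ u * (Real.cos (γ * u) * γ)| ≤ 2 / (1 - τ) * γ := by
      rw [abs_mul, abs_mul, habsγ]
      calc |deriv ψ u| * (|Real.cos (γ * u)| * γ) ≤ (2 / (1 - τ)) * (1 * γ) :=
          mul_le_mul (hψ1 u) (mul_le_mul_of_nonneg_right (Real.abs_cos_le_one _) hγ.le)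
            (by positivity) (by positivity)
        _ = 2 / (1 - τ) * γ := by ring
    have e3 : |ψ u * (-Real.sin (γ * u) * γ * γ)| ≤ γ ^ 2 := by
      rw [abs_mul, abs_mul, abs_mul, abs_neg, habsγ]
      have s1 : |Real.sin (γ * u)| * γ * γ ≤ 1 * γ * γ := by
        nlinarith [Real.abs_sin_le_one (γ * u), hγ.le]
      have s2 : |ψ u| * (|Real.sin (γ * u)| * γ * γ) ≤ 1 * (1 * γ * γ) :=
        mul_le_mul (hψ0 u) s1 (by positivity) zero_le_one
      nlinarith [s2]
    have e4 : |h2 u| ≤ |deriv (deriv ψ) u * Real.sin (γ * u) + deriv ψ u * (Real.cos (γ * u) * γ)|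
        + |deriv ψ u * (Real.cos (γ * u) * γ) + ψ u * (-Real.sin (γ * u) * γ * γ)| := abs_add_le _ _
    have e5 : |deriv (deriv ψ) u * Real.sin (γ * u) + deriv ψ u * (Real.cos (γ * u) * γ)|
        ≤ |deriv (deriv ψ) u * Real.sin (γ * u)| + |deriv ψ u * (Real.cos (γ * u) * γ)| :=
      abs_add_le _ _
    have e6 : |deriv ψ u * (Real.cos (γ * u) * γ) + ψ u * (-Real.sin (γ * u) * γ * γ)|
        ≤ |deriv ψ u * (Real.cos (γ * u) * γ)| + |ψ u * (-Real.sin (γ * u) * γ * γ)| :=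
      abs_add_le _ _
    have : 2 / (1 - τ) * γ + 2 / (1 - τ) * γ = 4 * γ / (1 - τ) := by ring
    rw [hB2def]
    linarith
  have hB1nn : 0 ≤ B1 := le_trans (abs_nonneg _) (hb1 0)
  have hB2pos : 0 < B2 := by rw [hB2def]; positivity
  -- choice of L
  set n : ℕ := d - 1 with hn
  set K : ℝ := B2 + n * B1 ^ 2 with hK
  have hKpos : 0 < K := by
    rw [hK]
    have : (0:ℝ) ≤ (n : ℝ) * B1 ^ 2 := by positivity
    linarith
  set c : ℝ := -gmax / (2 * K) with hc
  have hcpos : 0 < c := by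
    rw [hc]
    exact div_pos (by linarith) (by positivity)
  refine ⟨γ ^ 2 * c, by positivity, ?_, ?_⟩
  · have hLc : γ ^ 2 * c / γ ^ 2 = c := by field_simp
    rw [hLc]
    have hcK : c * K = -gmax / 2 := by
      rw [hc]; field_simp
    have hle : c * B2 ≤ c * K := by
      refine mul_le_mul_of_nonneg_left ?_ hcpos.le
      rw [hK]
      have : (0:ℝ) ≤ (n : ℝ) * B1 ^ 2 := by positivity
      linarith
    rw [hB2def] at hle
    linarith
  · intro ω hω
    have hLc : γ ^ 2 * c / γ ^ 2 = c := by field_simp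
    have hccabs : |ω * (γ ^ 2 * c / γ ^ 2)| = c := by
      rw [hLc]
      rcases hω with h | h <;> rw [h] <;> simp [abs_of_pos hcpos]
    have hcc : gmax + |ω * (γ ^ 2 * c / γ ^ 2)| * (B2 + n * B1 ^ 2) ≤ 0 := by
      rw [hccabs, ← hK]
      have hcK : c * K = -gmax / 2 := by rw [hc]; field_simp
      rw [hcK]
      linarith
    exact stmt13_key g (deriv g) (deriv (deriv g)) h h1 h2
      (fun u => (hgd u).hasDerivAt) (fun u => (hgd1 u).hasDerivAt) Hh1 Hh2
      hb0 hb1 hb2 hg2le hcc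
end

section
/- In the lower-bound construction with G_{+1}, G_{−1} ∈ 𝒦_{r,R} as above (two convex bodies differing by ±(L/γ_m²)H_m(x) on the top boundary over [−δ,δ]^{d−1}, with γ_m = (4/3)δ⁻¹πm and ψ supported in [−δ,δ] with positive infimum on [−3δ/4, 3δ/4]), the Nikodym distance satisfies: d_Δ(G_{+1}, G_{−1}) = (2L/γ_m²) ∏_{k=1}^{d−1} ∫_{[−δ,δ]} |sin(γ_m x_k) ψ(x_k)| dx_k ≥ C₁/m², where C₁ > 0 is a constant independent of m. -/
open MeasureTheory Set
open scoped Real symmDiff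

/-- The convex bodies `G_ω` of the lower-bound construction, as subsets of `ℝ^{d-1} × ℝ`. -/
def lbBody (d : ℕ) (δ γ L ω : ℝ) (ψ g : ℝ → ℝ) : Set ((Fin (d - 1) → ℝ) × ℝ) :=
  {p | (∀ k, p.1 k ∈ Icc (-δ) δ) ∧ -δ ≤ p.2 ∧
    p.2 ≤ (∑ k : Fin (d - 1), g (p.1 k)) +
      ω * (L / γ ^ 2) * ∏ k : Fin (d - 1), ψ (p.1 k) * Real.sin (γ * p.1 k)}

lemma stmt15_factor_lb (δ η γ : ℝ) (hδ : 0 < δ) (hη : 0 < η) (m : ℕ) (hm : 1 ≤ m)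
    (hγ : γ = (4/3) * δ⁻¹ * π * m)
    (ψ : ℝ → ℝ) (hψcont : Continuous ψ) (hψ0 : ∀ x, 0 ≤ ψ x)
    (hψη : ∀ x ∈ Icc (-(3 * δ / 4)) (3 * δ / 4), η ≤ ψ x) :
    η * (3 * δ / 4) ≤ ∫ x in Icc (-δ) δ, |Real.sin (γ * x) * ψ x| := by
  have hmR : (1:ℝ) ≤ (m:ℝ) := by exact_mod_cast hm
  have hγ0 : γ ≠ 0 := by
    rw [hγ]; positivity
  set a : ℝ := 3 * δ / 4 with ha_def
  have ha : 0 < a := by positivity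
  have haδ : a ≤ δ := by rw [ha_def]; linarith
  have hγa : γ * a = π * m := by
    rw [hγ, ha_def]; field_simp
  have hfcont : Continuous fun x => |Real.sin (γ * x) * ψ x| :=
    ((Real.continuous_sin.comp (continuous_mul_left γ)).mul hψcont).abs
  have hgcont : Continuous fun x => η * Real.sin (γ * x) ^ 2 :=
    continuous_const.mul ((Real.continuous_sin.comp (continuous_mul_left γ)).pow 2)
  have hfint : IntegrableOn (fun x => |Real.sin (γ * x) * ψ x|) (Icc (-δ) δ) :=
    hfcont.integrableOn_Icc
  have step1 : ∫ x in Icc (-a) a, |Real.sin (γ * x) * ψ x| ≤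
      ∫ x in Icc (-δ) δ, |Real.sin (γ * x) * ψ x| := by
    apply setIntegral_mono_set hfint
    · exact Filter.Eventually.of_forall fun x => abs_nonneg _
    · exact (Icc_subset_Icc (by linarith) haδ).eventuallyLE
  have step2 : ∫ x in Icc (-a) a, η * Real.sin (γ * x) ^ 2 ≤
      ∫ x in Icc (-a) a, |Real.sin (γ * x) * ψ x| := by
    apply setIntegral_mono_on hgcont.integrableOn_Icc hfcont.integrableOn_Icc measurableSet_Icc
    intro x hx
    have h1 : |Real.sin (γ * x)| ≤ 1 :=
      abs_le.2 ⟨Real.neg_one_le_sin _, Real.sin_le_one _⟩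
    have h2 : (0:ℝ) ≤ |Real.sin (γ * x)| := abs_nonneg _
    have h3 : η ≤ ψ x := hψη x (by simpa [ha_def] using hx)
    rw [abs_mul, abs_of_nonneg (hψ0 x)]
    calc η * Real.sin (γ * x) ^ 2 = η * |Real.sin (γ * x)| ^ 2 := by rw [sq_abs]
      _ ≤ η * |Real.sin (γ * x)| := by nlinarith [mul_nonneg (mul_nonneg hη.le h2) (sub_nonneg.2 h1)]
      _ ≤ ψ x * |Real.sin (γ * x)| := mul_le_mul_of_nonneg_right h3 h2
      _ = |Real.sin (γ * x)| * ψ x := mul_comm _ _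
  have step3 : ∫ x in Icc (-a) a, η * Real.sin (γ * x) ^ 2 = η * a := by
    rw [integral_Icc_eq_integral_Ioc,
      ← intervalIntegral.integral_of_le (by linarith : -a ≤ a),
      intervalIntegral.integral_const_mul]
    have := intervalIntegral.integral_comp_mul_left (a := -a) (b := a)
      (fun u => Real.sin u ^ 2) hγ0
    rw [this, integral_sin_sq]
    have h1 : γ * -a = -(π * m) := by rw [mul_neg, hγa]
    have h2 : Real.sin (π * m) = 0 := by
      rw [mul_comm]; exact Real.sin_nat_mul_pi m
    rw [h1, hγa]
    rw [Real.sin_neg, h2]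
    rw [smul_eq_mul]
    have : γ⁻¹ * (π * ↑m) = a := by
      rw [← hγa]; field_simp
    nlinarith [this]
  linarith

lemma stmt15_mem_iff (u v t δ : ℝ) (h1 : -δ ≤ u + v) (h2 : -δ ≤ u - v) :
    ((-δ ≤ t ∧ t ≤ u + v) ∧ ¬(-δ ≤ t ∧ t ≤ u - v)) ∨
      ((-δ ≤ t ∧ t ≤ u - v) ∧ ¬(-δ ≤ t ∧ t ≤ u + v)) ↔ u - |v| < t ∧ t ≤ u + |v| := by
  constructor
  · rintro (⟨⟨ha1, ha2⟩, hn⟩ | ⟨⟨ha1, ha2⟩, hn⟩) <;> push_neg at hn <;>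
      rcases abs_cases v with ⟨he, hs⟩ | ⟨he, hs⟩ <;>
      exact ⟨by linarith [hn ha1], by linarith [hn ha1]⟩
  · rintro ⟨hb1, hb2⟩
    rcases abs_cases v with ⟨he, hs⟩ | ⟨he, hs⟩
    · left
      exact ⟨⟨by linarith, by linarith⟩, fun hcon => by linarith [hcon.2]⟩
    · right
      exact ⟨⟨by linarith, by linarith⟩, fun hcon => by linarith [hcon.2]⟩

/-- In the lower-bound construction, the Nikodym distance between the two
bodies equals `(2L/γ_m²) ∏_k ∫_{[-δ,δ]} |sin(γ_m x) ψ(x)| dx` and is bounded below by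
`C₁/m²` with `C₁ > 0` independent of `m`. -/
theorem stmt_15
    (d : ℕ) (hd : 2 ≤ d) (δ : ℝ) (hδ : 0 < δ)
    (ψ : ℝ → ℝ) (hψcont : Continuous ψ) (hψpos : ∀ x, 0 ≤ ψ x)
    (hψsupp : Function.support ψ ⊆ Icc (-δ) δ)
    (hψinf : ∃ η > 0, ∀ x ∈ Icc (-(3 * δ / 4)) (3 * δ / 4), η ≤ ψ x)
    (g : ℝ → ℝ) (hgcont : Continuous g)
    (hg0 : ∀ x ∈ Icc (-δ) δ, 0 ≤ g x)
    (hgbound : ∀ x ∈ Icc (-δ) δ, g x < δ / (2 * ((d : ℝ) - 1)))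
    (L : ℝ) (hL : 0 < L) :
    ∃ C₁ : ℝ, 0 < C₁ ∧
      ∀ m : ℕ, 1 ≤ m →
      ∀ γm : ℝ, γm = (4/3) * δ⁻¹ * π * m →
      (∀ ω : ℝ, ω = 1 ∨ ω = -1 → ∀ x : Fin (d - 1) → ℝ, (∀ k, x k ∈ Icc (-δ) δ) →
        -δ ≤ (∑ k : Fin (d - 1), g (x k)) +
          ω * (L / γm ^ 2) * ∏ k : Fin (d - 1), ψ (x k) * Real.sin (γm * x k)) →
        (volume ((lbBody d δ γm L 1 ψ g) ∆ (lbBody d δ γm L (-1) ψ g))).toReal =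
            (2 * L / γm ^ 2) *
              ∏ _k : Fin (d - 1), ∫ x in Icc (-δ) δ, |Real.sin (γm * x) * ψ x| ∧
          C₁ / (m : ℝ) ^ 2 ≤
            (volume ((lbBody d δ γm L 1 ψ g) ∆ (lbBody d δ γm L (-1) ψ g))).toReal := by
  obtain ⟨η, hη, hψη⟩ := hψinf
  have hπ := Real.pi_pos
  refine ⟨2 * L * (3 * δ / (4 * π)) ^ 2 * (η * (3 * δ / 4)) ^ (d - 1), by positivity, ?_⟩
  intro m hm γm hγm h
  have hmR : (1:ℝ) ≤ (m:ℝ) := by exact_mod_cast hm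
  have hγpos : 0 < γm := by rw [hγm]; positivity
  have hcpos : 0 < L / γm ^ 2 := by positivity
  -- the perturbation product vanishes outside the box
  have hHzero : ∀ x : Fin (d - 1) → ℝ, (¬ ∀ k, x k ∈ Icc (-δ) δ) →
      (∏ k : Fin (d - 1), ψ (x k) * Real.sin (γm * x k)) = 0 := by
    intro x hx
    push_neg at hx
    obtain ⟨k, hk⟩ := hx
    have hk0 : ψ (x k) = 0 := by
      by_contra h0
      exact hk (hψsupp h0)
    exact Finset.prod_eq_zero (Finset.mem_univ k) (by rw [hk0, zero_mul])
  -- section computation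
  have hsec : ∀ x : Fin (d - 1) → ℝ,
      volume (Prod.mk x ⁻¹' ((lbBody d δ γm L 1 ψ g) ∆ (lbBody d δ γm L (-1) ψ g))) =
        ENNReal.ofReal ((2 * (L / γm ^ 2)) *
          |∏ k : Fin (d - 1), ψ (x k) * Real.sin (γm * x k)|) := by
    intro x
    by_cases hx : ∀ k, x k ∈ Icc (-δ) δ
    · have h1 : -δ ≤ (∑ k : Fin (d - 1), g (x k)) +
          (L / γm ^ 2) * ∏ k : Fin (d - 1), ψ (x k) * Real.sin (γm * x k) := by
        have := h 1 (Or.inl rfl) x hx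
        linarith [this]
      have h2 : -δ ≤ (∑ k : Fin (d - 1), g (x k)) -
          (L / γm ^ 2) * ∏ k : Fin (d - 1), ψ (x k) * Real.sin (γm * x k) := by
        have := h (-1) (Or.inr rfl) x hx
        linarith [this]
      have hub : Prod.mk x ⁻¹' ((lbBody d δ γm L 1 ψ g) ∆ (lbBody d δ γm L (-1) ψ g)) =
          Ioc ((∑ k : Fin (d - 1), g (x k)) -
              |(L / γm ^ 2) * ∏ k : Fin (d - 1), ψ (x k) * Real.sin (γm * x k)|)
            ((∑ k : Fin (d - 1), g (x k)) +
              |(L / γm ^ 2) * ∏ k : Fin (d - 1), ψ (x k) * Real.sin (γm * x k)|) := by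
        ext t
        simp only [mem_preimage, Set.mem_symmDiff, lbBody, mem_setOf_eq, mem_Ioc, hx,
          true_and, one_mul, neg_one_mul, neg_mul, forall_true_iff]
        rw [show (∑ k : Fin (d - 1), g (x k)) +
            -((L / γm ^ 2) * ∏ k : Fin (d - 1), ψ (x k) * Real.sin (γm * x k)) =
            (∑ k : Fin (d - 1), g (x k)) -
            (L / γm ^ 2) * ∏ k : Fin (d - 1), ψ (x k) * Real.sin (γm * x k) from by ring]
        exact stmt15_mem_iff _ _ t δ h1 (by linarith [h2])
      rw [hub, Real.volume_Ioc]
      congr 1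
      rw [abs_mul, abs_of_nonneg hcpos.le]
      ring
    · have hemp : Prod.mk x ⁻¹' ((lbBody d δ γm L 1 ψ g) ∆ (lbBody d δ γm L (-1) ψ g)) = ∅ := by
        ext t
        simp only [mem_preimage, Set.mem_symmDiff, lbBody, mem_setOf_eq,
          mem_empty_iff_false, iff_false]
        rintro (⟨⟨hk, _⟩, _⟩ | ⟨⟨hk, _⟩, _⟩) <;> exact hx hk
      rw [hemp, hHzero x hx]
      simp
  -- measurability
  have hclosed : ∀ ω : ℝ, IsClosed (lbBody d δ γm L ω ψ g) := by
    intro ω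
    have hb : IsClosed {p : (Fin (d - 1) → ℝ) × ℝ | ∀ k, p.1 k ∈ Icc (-δ) δ} := by
      have : {p : (Fin (d - 1) → ℝ) × ℝ | ∀ k, p.1 k ∈ Icc (-δ) δ} =
          ⋂ k, {p : (Fin (d - 1) → ℝ) × ℝ | p.1 k ∈ Icc (-δ) δ} := by
        ext p; simp
      rw [this]
      exact isClosed_iInter fun k =>
        isClosed_Icc.preimage ((continuous_apply k).comp continuous_fst)
    have hcfun : Continuous fun p : (Fin (d - 1) → ℝ) × ℝ =>
        (∑ k : Fin (d - 1), g (p.1 k)) +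
          ω * (L / γm ^ 2) * ∏ k : Fin (d - 1), ψ (p.1 k) * Real.sin (γm * p.1 k) := by
      apply Continuous.add
      · exact continuous_finset_sum _ fun k _ =>
          hgcont.comp ((continuous_apply k).comp continuous_fst)
      · exact continuous_const.mul (continuous_finset_prod _ fun k _ =>
          ((hψcont.comp ((continuous_apply k).comp continuous_fst)).mul
            (Real.continuous_sin.comp (continuous_const.mul
              ((continuous_apply k).comp continuous_fst)))))
    exact hb.inter ((isClosed_le continuous_const continuous_snd).inter
      (isClosed_le continuous_snd hcfun))
  have hmeasS : MeasurableSet ((lbBody d δ γm L 1 ψ g) ∆ (lbBody d δ γm L (-1) ψ g)) :=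
    ((hclosed 1).measurableSet).symmDiff ((hclosed (-1)).measurableSet)
  -- integrability of the product function
  have hFcont : Continuous fun x : Fin (d - 1) → ℝ =>
      |∏ k : Fin (d - 1), ψ (x k) * Real.sin (γm * x k)| :=
    (continuous_finset_prod _ fun k _ =>
      ((hψcont.comp (continuous_apply k)).mul
        (Real.continuous_sin.comp (continuous_const.mul (continuous_apply k))))).abs
  have hFsupp : HasCompactSupport fun x : Fin (d - 1) → ℝ =>
      |∏ k : Fin (d - 1), ψ (x k) * Real.sin (γm * x k)| := by
    apply HasCompactSupport.intro (isCompact_univ_pi fun _ => isCompact_Icc)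
    intro x hx
    rw [hHzero x (fun hall => hx fun k _ => hall k), abs_zero]
  have hFint : Integrable fun x : Fin (d - 1) → ℝ =>
      |∏ k : Fin (d - 1), ψ (x k) * Real.sin (γm * x k)| :=
    hFcont.integrable_of_hasCompactSupport hFsupp
  -- the volume computation
  have hvol : (volume ((lbBody d δ γm L 1 ψ g) ∆ (lbBody d δ γm L (-1) ψ g))) =
      ENNReal.ofReal ((2 * (L / γm ^ 2)) *
        ∫ x : Fin (d - 1) → ℝ, |∏ k : Fin (d - 1), ψ (x k) * Real.sin (γm * x k)|) := by
    rw [Measure.volume_eq_prod, Measure.prod_apply hmeasS, lintegral_congr hsec,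
      ← MeasureTheory.ofReal_integral_eq_lintegral_ofReal (hFint.const_mul _)
        (Filter.Eventually.of_forall fun x =>
          mul_nonneg (by positivity) (abs_nonneg _)),
      MeasureTheory.integral_const_mul]
  -- factor the integral as a product of 1-d integrals
  have honed : ∀ x : ℝ, |ψ x * Real.sin (γm * x)| = |Real.sin (γm * x) * ψ x| := by
    intro x; rw [mul_comm]
  have hprod : (∫ x : Fin (d - 1) → ℝ, |∏ k : Fin (d - 1), ψ (x k) * Real.sin (γm * x k)|) =
      ∏ _k : Fin (d - 1), ∫ x in Icc (-δ) δ, |Real.sin (γm * x) * ψ x| := by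
    have e1 : (fun x : Fin (d - 1) → ℝ =>
        |∏ k : Fin (d - 1), ψ (x k) * Real.sin (γm * x k)|) =
        fun x => ∏ k : Fin (d - 1), |Real.sin (γm * x k) * ψ (x k)| := by
      funext x
      rw [Finset.abs_prod]
      exact Finset.prod_congr rfl fun k _ => honed (x k)
    rw [e1, MeasureTheory.volume_pi, MeasureTheory.integral_fintype_prod_eq_prod (ι := Fin (d - 1))
      (fun _ x => |Real.sin (γm * x) * ψ x|)]
    refine Finset.prod_congr rfl fun k _ => ?_
    rw [← integral_indicator measurableSet_Icc]
    congr 1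
    refine (indicator_eq_self.2 ?_).symm
    intro x hx
    have : ψ x ≠ 0 := by
      intro h0
      simp [h0] at hx
    exact hψsupp this
  have hPnn : (0:ℝ) ≤ ∏ _k : Fin (d - 1), ∫ x in Icc (-δ) δ, |Real.sin (γm * x) * ψ x| :=
    Finset.prod_nonneg fun k _ => integral_nonneg fun x => abs_nonneg _
  have heq : (volume ((lbBody d δ γm L 1 ψ g) ∆ (lbBody d δ γm L (-1) ψ g))).toReal =
      (2 * L / γm ^ 2) *
        ∏ _k : Fin (d - 1), ∫ x in Icc (-δ) δ, |Real.sin (γm * x) * ψ x| := by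
    rw [hvol, hprod, ENNReal.toReal_ofReal (by positivity)]
    ring
  refine ⟨heq, ?_⟩
  rw [heq]
  -- lower bound on the product
  have hfac : (η * (3 * δ / 4)) ^ (d - 1) ≤
      ∏ _k : Fin (d - 1), ∫ x in Icc (-δ) δ, |Real.sin (γm * x) * ψ x| := by
    calc (η * (3 * δ / 4)) ^ (d - 1)
        = ∏ _k : Fin (d - 1), (η * (3 * δ / 4)) := by
          rw [Finset.prod_const, Finset.card_univ, Fintype.card_fin]
      _ ≤ ∏ _k : Fin (d - 1), ∫ x in Icc (-δ) δ, |Real.sin (γm * x) * ψ x| :=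
          Finset.prod_le_prod (fun _ _ => by positivity)
            (fun _ _ => stmt15_factor_lb δ η γm hδ hη m hm hγm ψ hψcont hψpos hψη)
  have hmne : (m:ℝ) ≠ 0 := by positivity
  have hγeq : 2 * L / γm ^ 2 = 2 * L * (3 * δ / (4 * π)) ^ 2 / (m:ℝ) ^ 2 := by
    rw [hγm]
    field_simp
  calc 2 * L * (3 * δ / (4 * π)) ^ 2 * (η * (3 * δ / 4)) ^ (d - 1) / (m:ℝ) ^ 2
      = (2 * L / γm ^ 2) * (η * (3 * δ / 4)) ^ (d - 1) := by rw [hγeq]; ring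
    _ ≤ (2 * L / γm ^ 2) *
        ∏ _k : Fin (d - 1), ∫ x in Icc (-δ) δ, |Real.sin (γm * x) * ψ x| :=
          mul_le_mul_of_nonneg_left hfac (by positivity)
end

section
/- Let G ⊂ ℝ^d satisfy B(a, r) ⊆ G ⊆ B(0, R), let X be uniform in G, and let ε be uniformly distributed on the Euclidean ball B(0, Q) with Q > r, independent of X. For a unit vector u, let G_u(x) = P[⟨u, X + ε⟩ − h_G(u) ≤ x]. Then there exists a positive constant c depending only on r, R, and d such that for all x with Q − r ≤ x ≤ Q: 1 − G_u(x) ≥ c (Q − x)^{(3d+1)/2}. -/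
open MeasureTheory Metric Set
open scoped RealInnerProductSpace

noncomputable def unifOn {d : ℕ} (G : Set (EuclideanSpace ℝ (Fin d))) :
    Measure (EuclideanSpace ℝ (Fin d)) :=
  (volume G)⁻¹ • volume.restrict G

lemma cap_lower (d : ℕ) (hd : 2 ≤ d) (u : EuclideanSpace ℝ (Fin d)) (hu : ‖u‖ = 1)
    (Q r δ : ℝ) (hδ : 0 < δ) (hδr : δ ≤ r) (hrQ : r ≤ Q) (hr : 0 < r) :
    ENNReal.ofReal (δ/4 * (Real.sqrt (δ*r/d))^(d-1)) ≤
      volume {y : EuclideanSpace ℝ (Fin d) | Q - δ/2 ≤ ⟪u,y⟫ ∧ ‖y‖ ≤ Q} := by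
  have hd0 : (0:ℝ) < d := by positivity
  have hQ0 : (0:ℝ) < Q := lt_of_lt_of_le hr hrQ
  set i0 : Fin d := ⟨0, by omega⟩
  have hcard : Module.finrank ℝ (EuclideanSpace ℝ (Fin d)) = Fintype.card (Fin d) := by simp
  have horth : Orthonormal ℝ (Set.restrict {i0} (fun _ => u)) := by
    refine ⟨fun i => hu, fun i j hij => absurd ?_ hij⟩
    ext
    have h1 := i.2; have h2 := j.2
    simp only [Set.mem_singleton_iff] at h1 h2
    rw [h1, h2]
  obtain ⟨b, hb⟩ := horth.exists_orthonormalBasis_extension_of_card_eq hcard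
  have hbu : b i0 = u := hb _ rfl
  set ρ : ℝ := Real.sqrt (δ*r/d) / 2 with hρ
  have hρ0 : 0 ≤ ρ := by positivity
  set S₂ : Set (EuclideanSpace ℝ (Fin d)) := {z | Q - δ/2 ≤ z i0} ∩ closedBall 0 Q with hS₂
  have hmeas1 : MeasurableSet {z : EuclideanSpace ℝ (Fin d) | Q - δ/2 ≤ z i0} := by
    have : {z : EuclideanSpace ℝ (Fin d) | Q - δ/2 ≤ z i0}
        = ((MeasurableEquiv.toLp 2 (Fin d → ℝ)).symm) ⁻¹' ((fun f : Fin d → ℝ => f i0) ⁻¹' (Ici (Q - δ/2))) := rfl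
    rw [this]
    exact ((MeasurableEquiv.toLp 2 (Fin d → ℝ)).symm).measurable
      ((measurable_pi_apply i0) measurableSet_Ici)
  have hmeasS₂ : MeasurableSet S₂ := hmeas1.inter measurableSet_closedBall
  have hcap : {y : EuclideanSpace ℝ (Fin d) | Q - δ/2 ≤ ⟪u,y⟫ ∧ ‖y‖ ≤ Q} = b.repr ⁻¹' S₂ := by
    ext y
    simp only [hS₂, Set.mem_setOf_eq, Set.mem_preimage, Set.mem_inter_iff,
      mem_closedBall_zero_iff, b.repr.norm_map, OrthonormalBasis.repr_apply_apply, hbu,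
      real_inner_comm]
  rw [hcap, (b.measurePreserving_repr).measure_preimage hmeasS₂.nullMeasurableSet]
  set I : Fin d → Set ℝ := fun i => if i = i0 then Icc (Q - δ/2) (Q - δ/4) else Icc (-ρ) ρ with hI
  have hbox : ((MeasurableEquiv.toLp 2 (Fin d → ℝ)).symm) ⁻¹' (Set.univ.pi I) ⊆ S₂ := by
    intro z hz
    simp only [Set.mem_preimage, Set.mem_pi, Set.mem_univ, forall_true_left] at hz
    have hz0 : z i0 ∈ Icc (Q - δ/2) (Q - δ/4) := by simpa [hI] using hz i0
    have hzi : ∀ i, i ≠ i0 → z i ∈ Icc (-ρ) ρ := by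
      intro i hi
      simpa [hI, hi] using hz i
    constructor
    · exact hz0.1
    · rw [mem_closedBall_zero_iff]
      have hsum : ∑ i, ‖z i‖^2 ≤ Q^2 := by
        have hsplit : ∑ i, ‖z i‖^2
            = ‖z i0‖^2 + ∑ i ∈ Finset.univ.erase i0, ‖z i‖^2 :=
          (Finset.add_sum_erase _ _ (Finset.mem_univ i0)).symm
        have h1 : ‖z i0‖^2 ≤ (Q - δ/4)^2 := by
          rw [Real.norm_eq_abs, sq_abs]
          have hq : 0 ≤ Q - δ/2 := by linarith
          exact sq_le_sq' (by linarith [hz0.1]) hz0.2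
        have h2 : ∑ i ∈ Finset.univ.erase i0, ‖z i‖^2 ≤ (d-1 : ℕ) * ρ^2 := by
          calc ∑ i ∈ Finset.univ.erase i0, ‖z i‖^2
              ≤ ∑ _i ∈ Finset.univ.erase i0, ρ^2 := by
                refine Finset.sum_le_sum fun i hi => ?_
                have := hzi i (Finset.ne_of_mem_erase hi)
                rw [Real.norm_eq_abs, sq_abs]
                exact sq_le_sq' this.1 this.2
            _ = (d-1 : ℕ) * ρ^2 := by
                rw [Finset.sum_const, Finset.card_erase_of_mem (Finset.mem_univ i0),
                  Finset.card_univ, Fintype.card_fin, nsmul_eq_mul]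
        have hρsq : ρ^2 = δ*r/d/4 := by
          rw [hρ, div_pow, Real.sq_sqrt (by positivity)]
          norm_num
        have hdd : ((d-1 : ℕ) : ℝ) * (δ*r/d/4) ≤ δ*r/4 := by
          have h3 : ((d-1 : ℕ) : ℝ) ≤ (d:ℝ) := by
            exact_mod_cast Nat.cast_le.mpr (Nat.sub_le d 1)
          have h4 : 0 ≤ δ*r/d/4 := by positivity
          calc ((d-1 : ℕ) : ℝ) * (δ*r/d/4) ≤ (d:ℝ) * (δ*r/d/4) := by
                exact mul_le_mul_of_nonneg_right h3 h4
            _ = δ*r/4 := by field_simp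
        have hrQ' : δ*r/4 ≤ δ*Q/4 := by nlinarith
        nlinarith [hz0.1, hz0.2]
      calc ‖z‖ = Real.sqrt (∑ i, ‖z i‖^2) := by
            rw [EuclideanSpace.norm_eq]
        _ ≤ Real.sqrt (Q^2) := Real.sqrt_le_sqrt hsum
        _ = Q := Real.sqrt_sq hQ0.le
  refine le_trans ?_ (measure_mono hbox)
  have hImeas : ∀ i, MeasurableSet (I i) := by
    intro i
    by_cases h : i = i0 <;> simp [hI, h]
  rw [(EuclideanSpace.volume_preserving_symm_measurableEquiv_toLp (Fin d)).measure_preimage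
    (MeasurableSet.univ_pi hImeas).nullMeasurableSet]
  rw [volume_pi_pi]
  have hprod : ∏ i, volume (I i)
      = volume (I i0) * ∏ i ∈ Finset.univ.erase i0, volume (I i) :=
    (Finset.mul_prod_erase _ _ (Finset.mem_univ i0)).symm
  rw [hprod]
  have hIi0 : volume (I i0) = ENNReal.ofReal (δ/4) := by
    simp only [hI, if_pos rfl, Real.volume_Icc]
    congr 1; ring
  have hIrest : ∏ i ∈ Finset.univ.erase i0, volume (I i)
      = (ENNReal.ofReal (Real.sqrt (δ*r/d)))^(d-1) := by
    have : ∀ i ∈ Finset.univ.erase i0, volume (I i) = ENNReal.ofReal (Real.sqrt (δ*r/d)) := by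
      intro i hi
      simp only [hI, if_neg (Finset.ne_of_mem_erase hi), Real.volume_Icc]
      congr 1; rw [hρ]; ring
    rw [Finset.prod_congr rfl this, Finset.prod_const,
      Finset.card_erase_of_mem (Finset.mem_univ i0), Finset.card_univ, Fintype.card_fin]
  rw [hIi0, hIrest, ← ENNReal.ofReal_pow (by positivity), ← ENNReal.ofReal_mul (by positivity)]

lemma cone_ball (d : ℕ) {G : Set (EuclideanSpace ℝ (Fin d))} (hconv : Convex ℝ G)
    {a g : EuclideanSpace ℝ (Fin d)} {r R t : ℝ} (hr : 0 < r)
    (hball : closedBall a r ⊆ G) (hGR : G ⊆ closedBall 0 R) (hgG : g ∈ G)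
    (u : EuclideanSpace ℝ (Fin d)) (hu : ‖u‖ = 1) (ht0 : 0 < t) (ht1 : t ≤ 1) :
    closedBall ((1-t)•g + t•a) (t*r) ⊆ G ∩ {v | ⟪u,g⟫ - 2*R*t ≤ ⟪u,v⟫} := by
  intro z hz
  rw [mem_closedBall_iff_norm] at hz
  set w : EuclideanSpace ℝ (Fin d) := t⁻¹ • (z - (1-t)•g) with hw
  have hzw : z = (1-t)•g + t•w := by
    rw [hw]
    match_scalars <;> field_simp <;> ring
  have hwa : w ∈ closedBall a r := by
    rw [mem_closedBall_iff_norm]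
    have hwe : w - a = t⁻¹ • (z - ((1-t)•g + t•a)) := by
      rw [hw]
      match_scalars <;> field_simp
    rw [hwe, norm_smul, Real.norm_eq_abs, abs_of_pos (inv_pos.mpr ht0)]
    calc t⁻¹ * ‖z - ((1-t)•g + t•a)‖ ≤ t⁻¹ * (t*r) :=
          mul_le_mul_of_nonneg_left hz (inv_pos.mpr ht0).le
      _ = r := by field_simp
  have hwG : w ∈ G := hball hwa
  have hwR : ‖w‖ ≤ R := mem_closedBall_zero_iff.mp (hGR hwG)
  have hgR : ‖g‖ ≤ R := mem_closedBall_zero_iff.mp (hGR hgG)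
  constructor
  · rw [hzw]
    exact hconv hgG hwG (by linarith) ht0.le (by ring)
  · have hiz : ⟪u,z⟫ = (1-t)*⟪u,g⟫ + t*⟪u,w⟫ := by
      rw [hzw, inner_add_right, real_inner_smul_right, real_inner_smul_right]
    have hiw : |⟪u,w⟫| ≤ R := by
      calc |⟪u,w⟫| ≤ ‖u‖ * ‖w‖ := abs_real_inner_le_norm u w
        _ ≤ R := by rw [hu]; simpa using hwR
    have hig : |⟪u,g⟫| ≤ R := by
      calc |⟪u,g⟫| ≤ ‖u‖ * ‖g‖ := abs_real_inner_le_norm u g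
        _ ≤ R := by rw [hu]; simpa using hgR
    rw [Set.mem_setOf_eq, hiz]
    rw [abs_le] at hiw hig
    nlinarith [hiw.1, hig.2]

/-- For `X` uniform in a convex body `G` with `B(a,r) ⊆ G ⊆ B(0,R)` and
`ε` uniform on `B(0,Q)` (`Q > r`) independent of `X`, the cdf `G_u` of
`⟨u, X + ε⟩ - h_G(u)` satisfies `1 - G_u(x) ≥ c (Q - x)^{(3d+1)/2}` for `Q - r ≤ x ≤ Q`. -/
theorem stmt_17
    (d : ℕ) (hd : 2 ≤ d) (r R Q : ℝ) (hr : 0 < r) (hrR : r ≤ R) (hQ : r < Q) :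
    ∃ c : ℝ, 0 < c ∧
      ∀ (G : Set (EuclideanSpace ℝ (Fin d))), Convex ℝ G → IsCompact G →
      ∀ a : EuclideanSpace ℝ (Fin d), closedBall a r ⊆ G → G ⊆ closedBall 0 R →
      ∀ u : EuclideanSpace ℝ (Fin d), ‖u‖ = 1 →
      ∀ x : ℝ, Q - r ≤ x → x ≤ Q →
        c * (Q - x) ^ ((3 * (d : ℝ) + 1) / 2) ≤
          1 - (((unifOn G).prod (unifOn (closedBall (0 : EuclideanSpace ℝ (Fin d)) Q)))
              {p : EuclideanSpace ℝ (Fin d) × EuclideanSpace ℝ (Fin d) |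
                ⟪u, p.1 + p.2⟫ - sSup ((fun v => ⟪u, v⟫) '' G) ≤ x}).toReal := by
  have hQ0 : (0:ℝ) < Q := hr.trans hQ
  have hR0 : (0:ℝ) < R := hr.trans_le hrR
  have hd0 : (0:ℝ) < d := by positivity
  set ω := volume (ball (0 : EuclideanSpace ℝ (Fin d)) 1) with hωdef
  have hω0 : 0 < ω := measure_ball_pos _ _ one_pos
  have hωtop : ω ≠ ⊤ := measure_ball_lt_top.ne
  have hωr0 : 0 < ω.toReal := ENNReal.toReal_pos hω0.ne' hωtop
  have hfr : Module.finrank ℝ (EuclideanSpace ℝ (Fin d)) = d := by simp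
  set c : ℝ := ((r/(8*R))^d * ω.toReal) * (R^d*ω.toReal)⁻¹ *
      ((Real.sqrt (r/(d:ℝ)))^(d-1) * (4 * Q^d * ω.toReal)⁻¹) with hc
  have hc0 : 0 < c := by
    have h1 : (0:ℝ) < Real.sqrt (r/(d:ℝ)) := Real.sqrt_pos.mpr (by positivity)
    positivity
  refine ⟨c, hc0, ?_⟩
  intro G hGconv hGcomp a haG hGR u hu x hx1 hx2
  -- basic facts about G and the measures
  have haG' : a ∈ G := haG (mem_closedBall_self hr.le)
  have hGne : G.Nonempty := ⟨a, haG'⟩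
  set K := closedBall (0 : EuclideanSpace ℝ (Fin d)) Q with hK
  have hKvol : volume K = ENNReal.ofReal (Q^d) * ω := by
    rw [hK, Measure.addHaar_closedBall _ _ hQ0.le, hfr]
  have hGvol0 : volume G ≠ 0 := by
    refine fun h0 => ?_
    have : volume (closedBall a r) ≤ volume G := measure_mono haG
    rw [h0, le_zero_iff, Measure.addHaar_closedBall _ _ hr.le, hfr] at this
    have : ENNReal.ofReal (r^d) * ω ≠ 0 :=
      mul_ne_zero (by simp [ENNReal.ofReal_eq_zero]; positivity) hω0.ne'
    exact this (by assumption)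
  have hGvoltop : volume G ≠ ⊤ :=
    ((measure_mono hGR).trans_lt measure_closedBall_lt_top).ne
  have hKvol0 : volume K ≠ 0 := by
    rw [hKvol]
    exact mul_ne_zero (by simp [ENNReal.ofReal_eq_zero]; positivity) hω0.ne'
  have hKvoltop : volume K ≠ ⊤ := measure_closedBall_lt_top.ne
  haveI hPμ : IsProbabilityMeasure (unifOn G) := by
    constructor
    rw [unifOn, Measure.smul_apply, Measure.restrict_apply_univ, smul_eq_mul,
      ENNReal.inv_mul_cancel hGvol0 hGvoltop]
  haveI hPν : IsProbabilityMeasure (unifOn K) := by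
    constructor
    rw [unifOn, Measure.smul_apply, Measure.restrict_apply_univ, smul_eq_mul,
      ENNReal.inv_mul_cancel hKvol0 hKvoltop]
  haveI : IsProbabilityMeasure ((unifOn G).prod (unifOn K)) := by infer_instance
  -- the maximizer of the inner product
  have hcont : Continuous fun v : EuclideanSpace ℝ (Fin d) => ⟪u,v⟫ :=
    continuous_const.inner continuous_id
  obtain ⟨g, hgG, hgmax⟩ := hGcomp.exists_isMaxOn hGne hcont.continuousOn
  set h : ℝ := sSup ((fun v => ⟪u, v⟫) '' G) with hh
  have hbdd : BddAbove ((fun v => ⟪u, v⟫) '' G) := by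
    refine ⟨⟪u,g⟫, ?_⟩
    rintro y ⟨v, hv, rfl⟩
    exact hgmax hv
  have hhg : h = ⟪u,g⟫ := by
    refine le_antisymm (csSup_le (hGne.image _) ?_) (le_csSup hbdd (mem_image_of_mem _ hgG))
    rintro y ⟨v, hv, rfl⟩
    exact hgmax hv
  -- the event
  set S : Set (EuclideanSpace ℝ (Fin d) × EuclideanSpace ℝ (Fin d)) :=
    {p | ⟪u, p.1 + p.2⟫ - h ≤ x} with hS
  have hScont : Continuous fun p : EuclideanSpace ℝ (Fin d) × EuclideanSpace ℝ (Fin d) =>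
      ⟪u, p.1 + p.2⟫ - h := (continuous_const.inner (continuous_fst.add continuous_snd)).sub
        continuous_const
  have hSmeas : MeasurableSet S :=
    hScont.measurable measurableSet_Iic
  set P := ((unifOn G).prod (unifOn K)) S with hP
  have hPle : P ≤ 1 := prob_le_one
  have hgoal : 1 - P.toReal = (((unifOn G).prod (unifOn K)) Sᶜ).toReal := by
    rw [measure_compl hSmeas (measure_ne_top _ _), measure_univ,
      ENNReal.toReal_sub_of_le hPle ENNReal.one_ne_top, ENNReal.toReal_one]
  rw [hgoal]
  -- trivial case x = Q
  rcases eq_or_lt_of_le hx2 with hxQ | hxQ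
  · rw [hxQ, sub_self, Real.zero_rpow (by positivity), mul_zero]
    exact ENNReal.toReal_nonneg
  set δ : ℝ := Q - x with hδdef
  have hδ0 : 0 < δ := by simp [hδdef]; linarith
  have hδr : δ ≤ r := by simp [hδdef]; linarith
  -- events
  set t0 : ℝ := δ/(8*R) with ht0def
  have ht00 : 0 < t0 := by positivity
  have ht01 : t0 ≤ 1 := by
    rw [ht0def, div_le_one (by positivity)]
    nlinarith
  set A : Set (EuclideanSpace ℝ (Fin d)) := {v | h - δ/4 ≤ ⟪u,v⟫} with hA
  set B : Set (EuclideanSpace ℝ (Fin d)) := {y | Q - δ/2 ≤ ⟪u,y⟫} with hB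
  have hAmeas : MeasurableSet A := measurableSet_le measurable_const hcont.measurable
  have hBmeas : MeasurableSet B := measurableSet_le measurable_const hcont.measurable
  have hABsub : A ×ˢ B ⊆ Sᶜ := by
    rintro ⟨p1, p2⟩ ⟨h1, h2⟩
    simp only [hA, hB, Set.mem_setOf_eq] at h1 h2
    simp only [hS, Set.mem_compl_iff, Set.mem_setOf_eq, not_le, inner_add_right]
    have hxδ : x = Q - δ := by rw [hδdef]; ring
    linarith
  -- the cone ball inside A ∩ G
  have hcone := cone_ball d hGconv hr haG hGR hgG u hu ht00 ht01
  have h2Rt : ⟪u,g⟫ - 2*R*t0 = h - δ/4 := by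
    rw [hhg, ht0def]
    field_simp
    ring
  have hAG : closedBall ((1-t0)•g + t0•a) (t0*r) ⊆ A ∩ G := by
    intro z hz
    obtain ⟨hzG, hzI⟩ := hcone hz
    rw [Set.mem_setOf_eq, h2Rt] at hzI
    exact ⟨hzI, hzG⟩
  -- lower bound for the first factor
  have hμA : ENNReal.ofReal ((R^d*ω.toReal)⁻¹ * ((t0*r)^d * ω.toReal)) ≤ unifOn G A := by
    have hv1 : ENNReal.ofReal ((t0*r)^d * ω.toReal) ≤ volume (A ∩ G) := by
      refine le_trans ?_ (measure_mono hAG)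
      rw [Measure.addHaar_closedBall _ _ (by positivity : (0:ℝ) ≤ t0*r), hfr,
        ENNReal.ofReal_mul (by positivity), ENNReal.ofReal_toReal hωtop]
    have hv2 : ENNReal.ofReal ((R^d*ω.toReal)⁻¹) ≤ (volume G)⁻¹ := by
      rw [ENNReal.ofReal_inv_of_pos (by positivity)]
      refine ENNReal.inv_le_inv' ?_
      calc volume G ≤ volume (closedBall (0 : EuclideanSpace ℝ (Fin d)) R) :=
            measure_mono hGR
        _ = ENNReal.ofReal (R^d * ω.toReal) := by
            rw [Measure.addHaar_closedBall _ _ hR0.le, hfr,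
              ENNReal.ofReal_mul (by positivity), ENNReal.ofReal_toReal hωtop]
    rw [unifOn, Measure.smul_apply, smul_eq_mul, Measure.restrict_apply hAmeas,
      ENNReal.ofReal_mul (by positivity)]
    exact mul_le_mul' hv2 hv1
  -- lower bound for the second factor
  have hνB : ENNReal.ofReal ((Q^d*ω.toReal)⁻¹ * (δ/4 * (Real.sqrt (δ*r/(d:ℝ)))^(d-1)))
      ≤ unifOn K B := by
    have hv1 : ENNReal.ofReal (δ/4 * (Real.sqrt (δ*r/(d:ℝ)))^(d-1)) ≤ volume (B ∩ K) := by
      have hBK : B ∩ K = {y : EuclideanSpace ℝ (Fin d) | Q - δ/2 ≤ ⟪u,y⟫ ∧ ‖y‖ ≤ Q} := by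
        ext y
        simp [hB, hK, mem_closedBall_zero_iff, Set.mem_setOf_eq]
      rw [hBK]
      exact cap_lower d hd u hu Q r δ hδ0 hδr hQ.le hr
    have hv2 : ENNReal.ofReal ((Q^d*ω.toReal)⁻¹) ≤ (volume K)⁻¹ := by
      rw [ENNReal.ofReal_inv_of_pos (by positivity)]
      refine ENNReal.inv_le_inv' (le_of_eq ?_)
      rw [hKvol, ENNReal.ofReal_mul (by positivity), ENNReal.ofReal_toReal hωtop]
    rw [unifOn, Measure.smul_apply, smul_eq_mul, Measure.restrict_apply hBmeas,
      ENNReal.ofReal_mul (by positivity)]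
    exact mul_le_mul' hv2 hv1
  clear_value t0 δ
  -- rpow algebra
  have hcast : ((d-1:ℕ):ℝ) = (d:ℝ) - 1 := by
    have h1 : 1 ≤ d := by omega
    rw [Nat.cast_sub h1, Nat.cast_one]
  have hpow2 : δ ^ ((1/2:ℝ)*((d:ℝ)-1)) = Real.sqrt δ ^ (d-1) := by
    rw [Real.sqrt_eq_rpow, ← Real.rpow_natCast (δ ^ ((1:ℝ)/2)) (d-1), ← Real.rpow_mul hδ0.le,
      hcast]
  have hkey : (3*(d:ℝ)+1)/2 = ((d:ℝ) + 1) + (1/2)*((d:ℝ)-1) := by ring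
  have hrpow : δ ^ ((3*(d:ℝ)+1)/2) = δ^d * δ * Real.sqrt δ ^ (d-1) := by
    rw [hkey, Real.rpow_add hδ0, Real.rpow_add hδ0, Real.rpow_one, Real.rpow_natCast, hpow2]
  have hsplit : Real.sqrt (δ*r/(d:ℝ)) = Real.sqrt δ * Real.sqrt (r/(d:ℝ)) := by
    rw [mul_div_assoc, Real.sqrt_mul hδ0.le]
  -- final chain
  have halg : c * δ ^ ((3*(d:ℝ)+1)/2)
      = ((R^d*ω.toReal)⁻¹ * ((t0*r)^d * ω.toReal))
        * ((Q^d*ω.toReal)⁻¹ * (δ/4 * (Real.sqrt (δ*r/(d:ℝ)))^(d-1))) := by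
    rw [hrpow, hsplit, mul_pow, hc, ht0def]
    ring
  have hfinal : ENNReal.ofReal (c * δ ^ ((3*(d:ℝ)+1)/2)) ≤ ((unifOn G).prod (unifOn K)) Sᶜ := by
    calc ENNReal.ofReal (c * δ ^ ((3*(d:ℝ)+1)/2))
        = ENNReal.ofReal ((R^d*ω.toReal)⁻¹ * ((t0*r)^d * ω.toReal))
          * ENNReal.ofReal ((Q^d*ω.toReal)⁻¹ * (δ/4 * (Real.sqrt (δ*r/(d:ℝ)))^(d-1))) := by
          rw [← ENNReal.ofReal_mul (by positivity), halg]
      _ ≤ unifOn G A * unifOn K B := mul_le_mul' hμA hνB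
      _ = ((unifOn G).prod (unifOn K)) (A ×ˢ B) := (Measure.prod_prod _ _).symm
      _ ≤ ((unifOn G).prod (unifOn K)) Sᶜ := measure_mono hABsub
  have hres := ENNReal.toReal_mono (measure_ne_top _ _) hfinal
  rwa [ENNReal.toReal_ofReal
    (mul_nonneg hc0.le (Real.rpow_nonneg hδ0.le _))] at hres
end
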